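/- arXiv:dg-ga/9511007 — 3 statements merged into one kernel-verified Lean document; each statement's English description precedes it below -/
import Mathlib

section
/- No convex polytope Δ ⊆ ℝ² that is an extension of the cone C = {(x,y) ∈ ℝ² : y ≥ 1 and x + y ≤ 3} is compatible with the x-ray 𝒳₀; consequently, 𝒳₀ does not satisfy the extension criterion. -/
open Set

noncomputable section

/-- We model `ℝ²` as `ℝ × ℝ`. -/
abbrev Pt : Type := ℝ × ℝ

/-- A (nonempty, compact) convex polytope in `ℝ²`: the convex hull of a
nonempty finite set of points. -/
def IsPolytope (S : Set Pt) : Prop :=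
  ∃ F : Finset Pt, F.Nonempty ∧ S = convexHull ℝ (F : Set Pt)

/-- The dimension of a (convex) set: the dimension of its affine span. -/
def setDim (S : Set Pt) : ℕ :=
  Module.finrank ℝ (affineSpan ℝ S).direction

/-- `σ` is a face of the convex set `Δ`: a nonempty convex extreme subset
(this includes `Δ` itself). -/
def IsFaceOf (σ Δ : Set Pt) : Prop :=
  σ.Nonempty ∧ Convex ℝ σ ∧ IsExtreme ℝ Δ σ

/-- A convex polytope `Δ` is compatible with the x-ray `𝒳`: one can choose,
for every face `σ` of `Δ`, an element `X σ ∈ 𝒳` with `dim (X σ) = dim σ` and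
`σ ⊆ X σ`, monotonically in `σ`. -/
def PolyCompat (𝒳 : Set (Set Pt)) (Δ : Set Pt) : Prop :=
  ∃ X : Set Pt → Set Pt,
    (∀ σ, IsFaceOf σ Δ → X σ ∈ 𝒳 ∧ setDim (X σ) = setDim σ ∧ σ ⊆ X σ) ∧
    (∀ σ σ', IsFaceOf σ Δ → IsFaceOf σ' Δ → σ ⊆ σ' → X σ ⊆ X σ')

/-- `C` is a closed convex cone with vertex `v`, i.e. `C = v + C₀` for a
closed convex cone `C₀` with apex `0`. -/
def IsConeWithVertex (C : Set Pt) (v : Pt) : Prop :=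
  IsClosed C ∧ Convex ℝ C ∧ v ∈ C ∧
    ∀ x ∈ C, ∀ a : ℝ, 0 ≤ a → v + a • (x - v) ∈ C

/-- A cone is strictly convex iff it contains no affine line. -/
def ContainsNoLine (C : Set Pt) : Prop :=
  ¬ ∃ p d : Pt, d ≠ 0 ∧ ∀ r : ℝ, p + r • d ∈ C

/-- A convex cone `C` with vertex `v` is compatible with the x-ray `𝒳`:
there is a neighborhood `U` of `v` such that one can choose, for every face
`σ` of `C`, an element `X σ ∈ 𝒳` with `dim (X σ) = dim σ` and
`σ ∩ U ⊆ X σ`, monotonically in `σ`. -/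
def ConeCompat (𝒳 : Set (Set Pt)) (C : Set Pt) (v : Pt) : Prop :=
  ∃ U ∈ nhds v, ∃ X : Set Pt → Set Pt,
    (∀ σ, IsFaceOf σ C → X σ ∈ 𝒳 ∧ setDim (X σ) = setDim σ ∧ σ ∩ U ⊆ X σ) ∧
    (∀ σ σ', IsFaceOf σ C → IsFaceOf σ' C → σ ⊆ σ' → X σ ⊆ X σ')

/-- A convex polytope `Δ` is an extension of the cone `C` with vertex `v`
if `C` and `Δ` agree near `v`. -/
def IsExtensionOf (Δ C : Set Pt) (v : Pt) : Prop :=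
  ∃ U ∈ nhds v, C ∩ U = Δ ∩ U

/-- An x-ray satisfies the extension criterion if every compatible strictly
convex cone extends to a compatible convex polytope. -/
def ExtensionCriterion (𝒳 : Set (Set Pt)) : Prop :=
  ∀ C : Set Pt, ∀ v : Pt, IsConeWithVertex C v → ContainsNoLine C →
    ConeCompat 𝒳 C v →
    ∃ Δ : Set Pt, IsPolytope Δ ∧ IsExtensionOf Δ C v ∧ PolyCompat 𝒳 Δ

/-- An x-ray: a finite collection of (nonempty, compact) convex polytopes. -/
def IsXRay (𝒳 : Set (Set Pt)) : Prop :=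
  𝒳.Finite ∧ ∀ X ∈ 𝒳, IsPolytope X

/-- The x-ray `𝒳₀` of Figure 2 of the paper (the example that fails the
extension criterion). -/
def Xray0 : Set (Set Pt) :=
  { {((0, 0) : Pt)}, {((4, 0) : Pt)}, {((1, 1) : Pt)}, {((2, 1) : Pt)},
    {((0, 3) : Pt)}, {((1, 3) : Pt)},
    segment ℝ ((0, 0) : Pt) ((0, 3) : Pt),
    segment ℝ ((0, 0) : Pt) ((4, 0) : Pt),
    segment ℝ ((0, 3) : Pt) ((1, 3) : Pt),
    segment ℝ ((1, 3) : Pt) ((4, 0) : Pt),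
    segment ℝ ((0, 0) : Pt) ((1, 1) : Pt),
    segment ℝ ((1, 1) : Pt) ((2, 1) : Pt),
    segment ℝ ((1, 1) : Pt) ((1, 3) : Pt),
    segment ℝ ((2, 1) : Pt) ((4, 0) : Pt),
    segment ℝ ((2, 1) : Pt) ((0, 3) : Pt),
    convexHull ℝ {((0, 0) : Pt), ((4, 0) : Pt), ((1, 3) : Pt), ((0, 3) : Pt)} }

section Aux

lemma setDim_eq' (S : Set Pt) : setDim S = Module.finrank ℝ (vectorSpan ℝ S) := by
  unfold setDim; rw [direction_affineSpan]

lemma setDim_le_two (S : Set Pt) : setDim S ≤ 2 := by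
  rw [setDim_eq']; simpa using Submodule.finrank_le (vectorSpan ℝ S)

lemma setDim_mono {S T : Set Pt} (h : S ⊆ T) : setDim S ≤ setDim T := by
  rw [setDim_eq', setDim_eq']
  exact Submodule.finrank_mono (vectorSpan_mono ℝ h)

lemma setDim_singleton (p : Pt) : setDim {p} = 0 := by
  rw [setDim_eq', vectorSpan_singleton]; simp

lemma setDim_le_one {S : Set Pt} {d : Pt}
    (h : ∀ x ∈ S, ∀ y ∈ S, ∃ t : ℝ, x - y = t • d) : setDim S ≤ 1 := by
  rw [setDim_eq']
  have hle : vectorSpan ℝ S ≤ Submodule.span ℝ {d} := by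
    rw [vectorSpan_def]
    apply Submodule.span_le.2
    rintro z ⟨x, hx, y, hy, rfl⟩
    obtain ⟨t, ht⟩ := h x hx y hy
    rw [SetLike.mem_coe, Submodule.mem_span_singleton]
    exact ⟨t, by simpa [eq_comm] using ht.symm⟩
  refine (Submodule.finrank_mono hle).trans ?_
  rcases eq_or_ne d 0 with rfl | hd
  · rw [Submodule.span_zero_singleton]; simp
  · rw [finrank_span_singleton hd]

lemma one_le_setDim {S : Set Pt} {p q : Pt} (hp : p ∈ S) (hq : q ∈ S) (hne : p ≠ q) :
    1 ≤ setDim S := by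
  rw [setDim_eq']
  have hm : p - q ∈ vectorSpan ℝ S := vsub_mem_vectorSpan ℝ hp hq
  have hnb : vectorSpan ℝ S ≠ ⊥ := by
    intro hbot
    rw [hbot, Submodule.mem_bot] at hm
    exact hne (by rwa [sub_eq_zero] at hm)
  exact Submodule.one_le_finrank_iff.2 hnb

lemma setDim_subsingleton {S : Set Pt} (h : setDim S = 0) {p q : Pt}
    (hp : p ∈ S) (hq : q ∈ S) : p = q := by
  by_contra hne
  have := one_le_setDim hp hq hne
  omega

lemma setDim_eq_two {S : Set Pt} {p q r : Pt} (hp : p ∈ S) (hq : q ∈ S) (hr : r ∈ S)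
    (hdet : (q - p).1 * (r - p).2 - (q - p).2 * (r - p).1 ≠ 0) : setDim S = 2 := by
  rw [setDim_eq']
  have hu : q - p ∈ vectorSpan ℝ S := vsub_mem_vectorSpan ℝ hq hp
  have hv : r - p ∈ vectorSpan ℝ S := vsub_mem_vectorSpan ℝ hr hp
  have htop : vectorSpan ℝ S = ⊤ := by
    rw [eq_top_iff]
    rintro ⟨a, b⟩ -
    set u := q - p
    set w := r - p
    set D := u.1 * w.2 - u.2 * w.1
    have key : (⟨a, b⟩ : Pt) = ((a * w.2 - b * w.1) / D) • u + ((b * u.1 - a * u.2) / D) • w := by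
      apply Prod.ext <;> · simp [Prod.smul_def, smul_eq_mul]; field_simp; ring
    rw [key]
    exact Submodule.add_mem _ (Submodule.smul_mem _ _ hu) (Submodule.smul_mem _ _ hv)
  rw [htop]
  simp [finrank_top ℝ Pt]

lemma mem_seg_iff {a b x : Pt} : x ∈ segment ℝ a b ↔
    ∃ t : ℝ, 0 ≤ t ∧ t ≤ 1 ∧ x.1 = a.1 + t * (b.1 - a.1) ∧ x.2 = a.2 + t * (b.2 - a.2) := by
  rw [segment_eq_image']
  constructor
  · rintro ⟨t, ⟨ht0, ht1⟩, rfl⟩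
    exact ⟨t, ht0, ht1, rfl, rfl⟩
  · rintro ⟨t, ht0, ht1, h1, h2⟩
    exact ⟨t, ⟨ht0, ht1⟩, by apply Prod.ext <;> simp [h1, h2]⟩

lemma setDim_segment {a b : Pt} (h : a ≠ b) : setDim (segment ℝ a b) = 1 := by
  refine le_antisymm ?_ (one_le_setDim (left_mem_segment ℝ a b) (right_mem_segment ℝ a b) h)
  apply setDim_le_one (d := b - a)
  intro x hx y hy
  rw [mem_seg_iff] at hx hy
  obtain ⟨s, _, _, hs1, hs2⟩ := hx
  obtain ⟨t, _, _, ht1, ht2⟩ := hy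
  exact ⟨s - t, by apply Prod.ext <;> · simp [Prod.smul_def, smul_eq_mul, hs1, hs2, ht1, ht2]; ring⟩

lemma seg_subset {s : Set Pt} {a b : Pt} (ha : a ∈ convexHull ℝ s) (hb : b ∈ convexHull ℝ s) :
    segment ℝ a b ⊆ convexHull ℝ s :=
  (convex_convexHull ℝ s).segment_subset ha hb

lemma mem_hull3 {s : Set Pt} {p1 p2 p3 x : Pt} (h1 : p1 ∈ s) (h2 : p2 ∈ s) (h3 : p3 ∈ s)
    {a b c : ℝ} (ha : 0 ≤ a) (hb : 0 ≤ b) (hc : 0 ≤ c) (habc : a + b + c = 1)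
    (hx : x = a • p1 + b • p2 + c • p3) : x ∈ convexHull ℝ s := by
  have hconv := convex_convexHull ℝ s
  have h1' := subset_convexHull ℝ s h1
  have h2' := subset_convexHull ℝ s h2
  have h3' := subset_convexHull ℝ s h3
  rcases eq_or_lt_of_le (by linarith : a + b ≤ 1) with hab | hab
  · have hc0 : c = 0 := by linarith
    subst hx
    rw [hc0, zero_smul, add_zero]
    exact hconv h1' h2' ha hb (by linarith)
  · rcases lt_or_eq_of_le (by linarith : (0:ℝ) ≤ a + b) with hpos | hzero
    · set q := (a / (a+b)) • p1 + (b / (a+b)) • p2 with hq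
      have hqmem : q ∈ convexHull ℝ s :=
        hconv h1' h2' (div_nonneg ha hpos.le) (div_nonneg hb hpos.le) (by field_simp)
      have hxq : x = (a+b) • q + c • p3 := by
        rw [hx, hq, smul_add, smul_smul, smul_smul]
        field_simp
      rw [hxq]
      exact hconv hqmem h3' (by linarith) hc (by linarith)
    · have ha0 : a = 0 := by linarith
      have hb0 : b = 0 := by linarith
      have hc1 : c = 1 := by linarith
      subst hx; rw [ha0, hb0, hc1]; simpa using h3'

lemma combo_eq {a₁ a₂ f₁ f₂ b : ℝ} (ha₁ : 0 < a₁) (ha₂ : 0 < a₂) (ha : a₁ + a₂ = 1)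
    (h1 : b ≤ f₁) (h2 : b ≤ f₂) (hsum : a₁ * f₁ + a₂ * f₂ = b) : f₁ = b ∧ f₂ = b := by
  have hb : a₁ * b + a₂ * b = b := by rw [← add_mul, ha, one_mul]
  constructor <;>
    nlinarith [mul_le_mul_of_nonneg_left h1 ha₁.le, mul_le_mul_of_nonneg_left h2 ha₂.le,
      mul_pos ha₁ ha₂]

lemma lincomb (c₁ c₂ a₁ a₂ : ℝ) (x y : Pt) :
    c₁ * (a₁ • x + a₂ • y).1 + c₂ * (a₁ • x + a₂ • y).2
      = a₁ * (c₁ * x.1 + c₂ * x.2) + a₂ * (c₁ * y.1 + c₂ * y.2) := by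
  simp [Prod.smul_def, smul_eq_mul]; ring

lemma isExtreme_minset {Δ : Set Pt} (c₁ c₂ b : ℝ)
    (hmin : ∀ p ∈ Δ, b ≤ c₁ * p.1 + c₂ * p.2) :
    IsExtreme ℝ Δ {p ∈ Δ | c₁ * p.1 + c₂ * p.2 = b} := by
  constructor
  · exact fun p hp => hp.1
  · rintro x₁ hx₁ x₂ hx₂ x ⟨hxΔ, hxb⟩ ⟨a₁, a₂, ha₁, ha₂, ha, rfl⟩
    have hsum : a₁ * (c₁ * x₁.1 + c₂ * x₁.2) + a₂ * (c₁ * x₂.1 + c₂ * x₂.2) = b := by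
      rw [← lincomb c₁ c₂ a₁ a₂ x₁ x₂]; exact hxb
    obtain ⟨e1, e2⟩ := combo_eq ha₁ ha₂ ha (hmin x₁ hx₁) (hmin x₂ hx₂) hsum
    exact ⟨hx₁, e1⟩

lemma convex_minset {Δ : Set Pt} (hΔ : Convex ℝ Δ) (c₁ c₂ b : ℝ) :
    Convex ℝ {p ∈ Δ | c₁ * p.1 + c₂ * p.2 = b} := by
  rintro x ⟨hxΔ, hx⟩ y ⟨hyΔ, hy⟩ a₁ a₂ ha₁ ha₂ ha
  refine ⟨hΔ hxΔ hyΔ ha₁ ha₂ ha, ?_⟩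
  rw [lincomb, hx, hy, ← add_mul, ha, one_mul]

lemma isFaceOf_minset {Δ : Set Pt} (hΔ : Convex ℝ Δ) (c₁ c₂ b : ℝ)
    (hmin : ∀ p ∈ Δ, b ≤ c₁ * p.1 + c₂ * p.2)
    (hne : {p ∈ Δ | c₁ * p.1 + c₂ * p.2 = b}.Nonempty) :
    IsFaceOf {p ∈ Δ | c₁ * p.1 + c₂ * p.2 = b} Δ :=
  ⟨hne, convex_minset hΔ c₁ c₂ b, isExtreme_minset c₁ c₂ b hmin⟩

end Aux

section Classify

lemma setDim_Q0 :
    setDim (convexHull ℝ {((0, 0) : Pt), ((4, 0) : Pt), ((1, 3) : Pt), ((0, 3) : Pt)}) = 2 := by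
  refine setDim_eq_two (p := ((0,0):Pt)) (q := ((4,0):Pt)) (r := ((0,3):Pt))
    (subset_convexHull ℝ _ (by norm_num)) (subset_convexHull ℝ _ (by norm_num))
    (subset_convexHull ℝ _ (by norm_num)) ?_
  norm_num [Prod.fst_sub, Prod.snd_sub]

lemma xray0_dim0 {X : Set Pt} (hX : X ∈ Xray0) (hdim : setDim X = 0) :
    X = {((0,0):Pt)} ∨ X = {((4,0):Pt)} ∨ X = {((1,1):Pt)} ∨ X = {((2,1):Pt)} ∨
      X = {((0,3):Pt)} ∨ X = {((1,3):Pt)} := by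
  simp only [Xray0, Set.mem_insert_iff, Set.mem_singleton_iff] at hX
  rcases hX with rfl|rfl|rfl|rfl|rfl|rfl|rfl|rfl|rfl|rfl|rfl|rfl|rfl|rfl|rfl|rfl
  · exact Or.inl rfl
  · exact Or.inr (Or.inl rfl)
  · exact Or.inr (Or.inr (Or.inl rfl))
  · exact Or.inr (Or.inr (Or.inr (Or.inl rfl)))
  · exact Or.inr (Or.inr (Or.inr (Or.inr (Or.inl rfl))))
  · exact Or.inr (Or.inr (Or.inr (Or.inr (Or.inr rfl))))
  · rw [setDim_segment (by norm_num [Prod.ext_iff])] at hdim; omega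
  · rw [setDim_segment (by norm_num [Prod.ext_iff])] at hdim; omega
  · rw [setDim_segment (by norm_num [Prod.ext_iff])] at hdim; omega
  · rw [setDim_segment (by norm_num [Prod.ext_iff])] at hdim; omega
  · rw [setDim_segment (by norm_num [Prod.ext_iff])] at hdim; omega
  · rw [setDim_segment (by norm_num [Prod.ext_iff])] at hdim; omega
  · rw [setDim_segment (by norm_num [Prod.ext_iff])] at hdim; omega
  · rw [setDim_segment (by norm_num [Prod.ext_iff])] at hdim; omega
  · rw [setDim_segment (by norm_num [Prod.ext_iff])] at hdim; omega
  · rw [setDim_Q0] at hdim; omega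

lemma xray0_dim1 {X : Set Pt} (hX : X ∈ Xray0) (hdim : setDim X = 1) :
    X = segment ℝ ((0,0):Pt) ((0,3):Pt) ∨ X = segment ℝ ((0,0):Pt) ((4,0):Pt) ∨
    X = segment ℝ ((0,3):Pt) ((1,3):Pt) ∨ X = segment ℝ ((1,3):Pt) ((4,0):Pt) ∨
    X = segment ℝ ((0,0):Pt) ((1,1):Pt) ∨ X = segment ℝ ((1,1):Pt) ((2,1):Pt) ∨
    X = segment ℝ ((1,1):Pt) ((1,3):Pt) ∨ X = segment ℝ ((2,1):Pt) ((4,0):Pt) ∨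
    X = segment ℝ ((2,1):Pt) ((0,3):Pt) := by
  simp only [Xray0, Set.mem_insert_iff, Set.mem_singleton_iff] at hX
  rcases hX with rfl|rfl|rfl|rfl|rfl|rfl|rfl|rfl|rfl|rfl|rfl|rfl|rfl|rfl|rfl|rfl
  · rw [setDim_singleton] at hdim; omega
  · rw [setDim_singleton] at hdim; omega
  · rw [setDim_singleton] at hdim; omega
  · rw [setDim_singleton] at hdim; omega
  · rw [setDim_singleton] at hdim; omega
  · rw [setDim_singleton] at hdim; omega
  · exact Or.inl rfl
  · exact Or.inr (Or.inl rfl)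
  · exact Or.inr (Or.inr (Or.inl rfl))
  · exact Or.inr (Or.inr (Or.inr (Or.inl rfl)))
  · exact Or.inr (Or.inr (Or.inr (Or.inr (Or.inl rfl))))
  · exact Or.inr (Or.inr (Or.inr (Or.inr (Or.inr (Or.inl rfl)))))
  · exact Or.inr (Or.inr (Or.inr (Or.inr (Or.inr (Or.inr (Or.inl rfl))))))
  · exact Or.inr (Or.inr (Or.inr (Or.inr (Or.inr (Or.inr (Or.inr (Or.inl rfl)))))))
  · exact Or.inr (Or.inr (Or.inr (Or.inr (Or.inr (Or.inr (Or.inr (Or.inr rfl)))))))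
  · rw [setDim_Q0] at hdim; omega

lemma xray0_dim2 {X : Set Pt} (hX : X ∈ Xray0) (hdim : setDim X = 2) :
    X = convexHull ℝ {((0, 0) : Pt), ((4, 0) : Pt), ((1, 3) : Pt), ((0, 3) : Pt)} := by
  simp only [Xray0, Set.mem_insert_iff, Set.mem_singleton_iff] at hX
  rcases hX with rfl|rfl|rfl|rfl|rfl|rfl|rfl|rfl|rfl|rfl|rfl|rfl|rfl|rfl|rfl|rfl
  · rw [setDim_singleton] at hdim; omega
  · rw [setDim_singleton] at hdim; omega
  · rw [setDim_singleton] at hdim; omega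
  · rw [setDim_singleton] at hdim; omega
  · rw [setDim_singleton] at hdim; omega
  · rw [setDim_singleton] at hdim; omega
  · rw [setDim_segment (by norm_num [Prod.ext_iff])] at hdim; omega
  · rw [setDim_segment (by norm_num [Prod.ext_iff])] at hdim; omega
  · rw [setDim_segment (by norm_num [Prod.ext_iff])] at hdim; omega
  · rw [setDim_segment (by norm_num [Prod.ext_iff])] at hdim; omega
  · rw [setDim_segment (by norm_num [Prod.ext_iff])] at hdim; omega
  · rw [setDim_segment (by norm_num [Prod.ext_iff])] at hdim; omega
  · rw [setDim_segment (by norm_num [Prod.ext_iff])] at hdim; omega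
  · rw [setDim_segment (by norm_num [Prod.ext_iff])] at hdim; omega
  · rw [setDim_segment (by norm_num [Prod.ext_iff])] at hdim; omega
  · rfl

end Classify

section Forced

lemma forced_pt {X : Set Pt} (hX : X ∈ Xray0) (hdim : setDim X = 0) {p : Pt} (hp : p ∈ X) :
    p = (0,0) ∨ p = (4,0) ∨ p = (1,1) ∨ p = (2,1) ∨ p = (0,3) ∨ p = (1,3) := by
  rcases xray0_dim0 hX hdim with rfl|rfl|rfl|rfl|rfl|rfl <;> subst hp <;> simp

lemma forced_seg1 {X : Set Pt} (hX : X ∈ Xray0) (hdim : setDim X = 1) {δ : ℝ}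
    (hδ0 : 0 < δ) (hδ1 : δ < 1) (hmem : ((2-δ, 1) : Pt) ∈ X) :
    X = segment ℝ ((1,1):Pt) ((2,1):Pt) := by
  rcases xray0_dim1 hX hdim with rfl|rfl|rfl|rfl|rfl|rfl|rfl|rfl|rfl
  · exfalso; obtain ⟨t, ht0, ht1, h1, h2⟩ := mem_seg_iff.1 hmem; norm_num at h1 h2; linarith
  · exfalso; obtain ⟨t, ht0, ht1, h1, h2⟩ := mem_seg_iff.1 hmem; norm_num at h1 h2
  · exfalso; obtain ⟨t, ht0, ht1, h1, h2⟩ := mem_seg_iff.1 hmem; norm_num at h1 h2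
  · exfalso; obtain ⟨t, ht0, ht1, h1, h2⟩ := mem_seg_iff.1 hmem; norm_num at h1 h2; linarith
  · exfalso; obtain ⟨t, ht0, ht1, h1, h2⟩ := mem_seg_iff.1 hmem; norm_num at h1 h2; linarith
  · rfl
  · exfalso; obtain ⟨t, ht0, ht1, h1, h2⟩ := mem_seg_iff.1 hmem; norm_num at h1 h2; linarith
  · exfalso; obtain ⟨t, ht0, ht1, h1, h2⟩ := mem_seg_iff.1 hmem; norm_num at h1 h2; linarith
  · exfalso; obtain ⟨t, ht0, ht1, h1, h2⟩ := mem_seg_iff.1 hmem; norm_num at h1 h2; linarith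

lemma forced_seg2 {X : Set Pt} (hX : X ∈ Xray0) (hdim : setDim X = 1) {δ : ℝ}
    (hδ0 : 0 < δ) (hδ1 : δ < 1) (hmem : ((2-δ, 1+δ) : Pt) ∈ X) :
    X = segment ℝ ((2,1):Pt) ((0,3):Pt) := by
  rcases xray0_dim1 hX hdim with rfl|rfl|rfl|rfl|rfl|rfl|rfl|rfl|rfl
  · exfalso; obtain ⟨t, ht0, ht1, h1, h2⟩ := mem_seg_iff.1 hmem; norm_num at h1 h2; linarith
  · exfalso; obtain ⟨t, ht0, ht1, h1, h2⟩ := mem_seg_iff.1 hmem; norm_num at h1 h2; linarith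
  · exfalso; obtain ⟨t, ht0, ht1, h1, h2⟩ := mem_seg_iff.1 hmem; norm_num at h1 h2; linarith
  · exfalso; obtain ⟨t, ht0, ht1, h1, h2⟩ := mem_seg_iff.1 hmem; norm_num at h1 h2; linarith
  · exfalso; obtain ⟨t, ht0, ht1, h1, h2⟩ := mem_seg_iff.1 hmem; norm_num at h1 h2; linarith
  · exfalso; obtain ⟨t, ht0, ht1, h1, h2⟩ := mem_seg_iff.1 hmem; norm_num at h1 h2; linarith
  · exfalso; obtain ⟨t, ht0, ht1, h1, h2⟩ := mem_seg_iff.1 hmem; norm_num at h1 h2; linarith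
  · exfalso; obtain ⟨t, ht0, ht1, h1, h2⟩ := mem_seg_iff.1 hmem; norm_num at h1 h2; linarith
  · rfl

lemma kill_11_03 {X : Set Pt} (hX : X ∈ Xray0) (hdim : setDim X = 1)
    (ha : ((1,1):Pt) ∈ X) (hb : ((0,3):Pt) ∈ X) : False := by
  rcases xray0_dim1 hX hdim with rfl|rfl|rfl|rfl|rfl|rfl|rfl|rfl|rfl <;>
    obtain ⟨t, ht0, ht1, h1, h2⟩ := mem_seg_iff.1 ha <;>
    obtain ⟨s, hs0, hs1, g1, g2⟩ := mem_seg_iff.1 hb <;>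
    norm_num at h1 <;> norm_num at h2 <;> norm_num at g1 <;> norm_num at g2 <;> linarith

lemma kill_11_q {X : Set Pt} (hX : X ∈ Xray0) (hdim : setDim X = 1)
    (ha : ((1,1):Pt) ∈ X) {q : Pt} (hq : q ∈ X) (hq1 : q.1 < 1) (hq2 : 1 < q.2) : False := by
  rcases xray0_dim1 hX hdim with rfl|rfl|rfl|rfl|rfl|rfl|rfl|rfl|rfl <;>
    obtain ⟨t, ht0, ht1, h1, h2⟩ := mem_seg_iff.1 ha <;>
    obtain ⟨s, hs0, hs1, g1, g2⟩ := mem_seg_iff.1 hq <;>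
    norm_num at h1 <;> norm_num at h2 <;> norm_num at g1 <;> norm_num at g2 <;> linarith

end Forced

section Part1

lemma convex_halfplane (c₁ c₂ b : ℝ) : Convex ℝ {p : Pt | b ≤ c₁ * p.1 + c₂ * p.2} := by
  rintro x hx y hy a₁ a₂ ha₁ ha₂ ha
  have hb : a₁ * b + a₂ * b = b := by rw [← add_mul, ha, one_mul]
  simp only [Set.mem_setOf_eq] at hx hy ⊢
  rw [lincomb]
  nlinarith [mul_le_mul_of_nonneg_left hx ha₁, mul_le_mul_of_nonneg_left hy ha₂]

lemma dist_lt' {p q : Pt} {ε : ℝ} (h1 : |p.1 - q.1| < ε) (h2 : |p.2 - q.2| < ε) :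
    dist p q < ε := by
  rw [Prod.dist_eq, max_lt_iff]
  exact ⟨by rwa [Real.dist_eq], by rwa [Real.dist_eq]⟩

lemma combo_fst (t : ℝ) (v p : Pt) : ((1-t) • v + t • p).1 = v.1 + t * (p.1 - v.1) := by
  simp [Prod.smul_def, smul_eq_mul]; ring

lemma combo_snd (t : ℝ) (v p : Pt) : ((1-t) • v + t • p).2 = v.2 + t * (p.2 - v.2) := by
  simp [Prod.smul_def, smul_eq_mul]; ring

lemma noPoly : ∀ Δ : Set Pt, IsPolytope Δ →
    IsExtensionOf Δ {p : Pt | 1 ≤ p.2 ∧ p.1 + p.2 ≤ 3} ((2, 1) : Pt) →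
    ¬ PolyCompat Xray0 Δ := by
  classical
  rintro Δ ⟨F, hFne, hΔF⟩ ⟨U, hU, hCU⟩ ⟨X, hXf, hXmono⟩
  set v : Pt := (2, 1) with hvdef
  obtain ⟨ε, hε0, hball⟩ := Metric.mem_nhds_iff.1 hU
  set δ : ℝ := min (ε/2) (1/2) with hδdef
  have hδ0 : 0 < δ := lt_min (by linarith) (by norm_num)
  have hδ1 : δ < 1 := lt_of_le_of_lt (min_le_right _ _) (by norm_num)
  have hδε : δ < ε := lt_of_le_of_lt (min_le_left _ _) (by linarith)
  have hconvΔ : Convex ℝ Δ := hΔF ▸ convex_convexHull ℝ _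
  have hcomp : IsCompact Δ := hΔF ▸ F.finite_toSet.isCompact_convexHull ℝ
  -- membership of points near v
  have hmemC : ∀ p : Pt, 1 ≤ p.2 → p.1 + p.2 ≤ 3 → dist p v < ε → p ∈ Δ := by
    intro p h1 h2 h3
    have hpU : p ∈ U := hball h3
    have : p ∈ {p : Pt | 1 ≤ p.2 ∧ p.1 + p.2 ≤ 3} ∩ U := ⟨⟨h1, h2⟩, hpU⟩
    rw [hCU] at this
    exact this.1
  have hvΔ : v ∈ Δ := hmemC v (le_refl 1) (by norm_num) (by simpa using hε0)
  have hp₁Δ : ((2-δ, 1) : Pt) ∈ Δ := by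
    refine hmemC _ (by norm_num) (by norm_num; linarith) (dist_lt' ?_ ?_)
    · rw [abs_lt]; constructor <;> · norm_num; linarith
    · rw [abs_lt]; constructor <;> · norm_num; linarith
  have hp₂Δ : ((2-δ, 1+δ) : Pt) ∈ Δ := by
    refine hmemC _ (by norm_num; linarith) (by norm_num) (dist_lt' ?_ ?_)
    · rw [abs_lt]; constructor <;> · norm_num; linarith
    · rw [abs_lt]; constructor <;> · norm_num; linarith
  -- Δ is contained in the cone C
  have hΔC : ∀ p ∈ Δ, 1 ≤ p.2 ∧ p.1 + p.2 ≤ 3 := by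
    intro p hp
    set M : ℝ := |p.1 - 2| + |p.2 - 1| + 1 with hMdef
    have hM0 : 0 < M := by positivity
    set t : ℝ := min (1/2) (ε/(2*M)) with htdef
    have ht0 : 0 < t := lt_min (by norm_num) (by positivity)
    have ht1 : t ≤ 1 := le_trans (min_le_left _ _) (by norm_num)
    have htM : t ≤ ε/(2*M) := min_le_right _ _
    set q : Pt := (1-t) • v + t • p with hqdef
    have hqΔ : q ∈ Δ := hconvΔ hvΔ hp (by linarith) ht0.le (by ring)
    have hq1 : q.1 = 2 + t * (p.1 - 2) := by rw [hqdef, combo_fst]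
    have hq2 : q.2 = 1 + t * (p.2 - 1) := by rw [hqdef, combo_snd]
    have habs1 : |q.1 - 2| < ε := by
      rw [hq1]
      have e1 : |2 + t * (p.1 - 2) - 2| = t * |p.1 - 2| := by
        rw [show (2:ℝ) + t * (p.1 - 2) - 2 = t * (p.1 - 2) by ring, abs_mul,
          abs_of_nonneg ht0.le]
      rw [e1]
      have h2' : t * |p.1 - 2| ≤ t * M := by
        apply mul_le_mul_of_nonneg_left _ ht0.le
        have := abs_nonneg (p.2 - 1); linarith
      have h3' : t * M ≤ (ε/(2*M)) * M := mul_le_mul_of_nonneg_right htM hM0.le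
      have h4' : (ε/(2*M)) * M = ε/2 := by field_simp
      exact lt_of_le_of_lt (h2'.trans h3') (by rw [h4']; linarith)
    have habs2 : |q.2 - 1| < ε := by
      rw [hq2]
      have e1 : |1 + t * (p.2 - 1) - 1| = t * |p.2 - 1| := by
        rw [show (1:ℝ) + t * (p.2 - 1) - 1 = t * (p.2 - 1) by ring, abs_mul,
          abs_of_nonneg ht0.le]
      rw [e1]
      have h2' : t * |p.2 - 1| ≤ t * M := by
        apply mul_le_mul_of_nonneg_left _ ht0.le
        have := abs_nonneg (p.1 - 2); linarith
      have h3' : t * M ≤ (ε/(2*M)) * M := mul_le_mul_of_nonneg_right htM hM0.le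
      have h4' : (ε/(2*M)) * M = ε/2 := by field_simp
      exact lt_of_le_of_lt (h2'.trans h3') (by rw [h4']; linarith)
    have hqU : q ∈ U := hball (dist_lt' (by simpa using habs1) (by simpa using habs2))
    have hqC : 1 ≤ q.2 ∧ q.1 + q.2 ≤ 3 := by
      have : q ∈ {p : Pt | 1 ≤ p.2 ∧ p.1 + p.2 ≤ 3} ∩ U := by
        rw [hCU]; exact ⟨hqΔ, hqU⟩
      exact this.1
    constructor
    · nlinarith [hqC.1, hq2]
    · nlinarith [hqC.2, hq1, hq2]
  -- the bottom edge σ₁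
  set σ₁ : Set Pt := {p ∈ Δ | 0 * p.1 + 1 * p.2 = 1} with hσ₁def
  have hmin₁ : ∀ p ∈ Δ, 1 ≤ 0 * p.1 + 1 * p.2 := fun p hp => by
    have := (hΔC p hp).1; linarith
  have hvσ₁ : v ∈ σ₁ := ⟨hvΔ, by norm_num⟩
  have hp₁σ : ((2-δ, 1) : Pt) ∈ σ₁ := ⟨hp₁Δ, by norm_num⟩
  have hface₁ : IsFaceOf σ₁ Δ := isFaceOf_minset hconvΔ 0 1 1 hmin₁ ⟨v, hvσ₁⟩
  have hdim₁ : setDim σ₁ = 1 := by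
    refine le_antisymm ?_ (one_le_setDim hvσ₁ hp₁σ ?_)
    · apply setDim_le_one (d := ((1, 0) : Pt))
      intro x hx y hy
      refine ⟨x.1 - y.1, Prod.ext (by norm_num) ?_⟩
      have h1 := hx.2; have h2 := hy.2
      norm_num [Prod.smul_def]
      linarith
    · intro h
      rw [Prod.ext_iff] at h
      have := h.1; norm_num at this; linarith
  obtain ⟨hX₁mem, hX₁dim, hX₁sub⟩ := hXf σ₁ hface₁
  have hseg₁ : X σ₁ = segment ℝ ((1,1):Pt) ((2,1):Pt) :=
    forced_seg1 hX₁mem (by rw [hX₁dim, hdim₁]) hδ0 hδ1 (hX₁sub hp₁σ)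
  have hσ₁seg : σ₁ ⊆ segment ℝ ((1,1):Pt) ((2,1):Pt) := hseg₁ ▸ hX₁sub
  have hσ₁x : ∀ p ∈ σ₁, 1 ≤ p.1 ∧ p.1 ≤ 2 := by
    intro p hp
    obtain ⟨t, ht0', ht1', h1, h2⟩ := mem_seg_iff.1 (hσ₁seg hp)
    norm_num at h1
    constructor <;> linarith
  -- the slanted edge σ₂
  set σ₂ : Set Pt := {p ∈ Δ | (-1) * p.1 + (-1) * p.2 = -3} with hσ₂def
  have hmin₂ : ∀ p ∈ Δ, -3 ≤ (-1) * p.1 + (-1) * p.2 := fun p hp => by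
    have := (hΔC p hp).2; linarith
  have hvσ₂ : v ∈ σ₂ := ⟨hvΔ, by norm_num⟩
  have hp₂σ : ((2-δ, 1+δ) : Pt) ∈ σ₂ := ⟨hp₂Δ, by norm_num; ring⟩
  have hface₂ : IsFaceOf σ₂ Δ := isFaceOf_minset hconvΔ (-1) (-1) (-3) hmin₂ ⟨v, hvσ₂⟩
  have hdim₂ : setDim σ₂ = 1 := by
    refine le_antisymm ?_ (one_le_setDim hvσ₂ hp₂σ ?_)
    · apply setDim_le_one (d := ((1, -1) : Pt))
      intro x hx y hy
      refine ⟨x.1 - y.1, Prod.ext (by norm_num) ?_⟩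
      have h1 := hx.2; have h2 := hy.2
      norm_num [Prod.smul_def]
      linarith
    · intro h
      rw [Prod.ext_iff] at h
      have := h.1; norm_num at this; linarith
  obtain ⟨hX₂mem, hX₂dim, hX₂sub⟩ := hXf σ₂ hface₂
  have hseg₂ : X σ₂ = segment ℝ ((2,1):Pt) ((0,3):Pt) :=
    forced_seg2 hX₂mem (by rw [hX₂dim, hdim₂]) hδ0 hδ1 (hX₂sub hp₂σ)
  have hσ₂seg : σ₂ ⊆ segment ℝ ((2,1):Pt) ((0,3):Pt) := hseg₂ ▸ hX₂sub
  have hσ₂x : ∀ p ∈ σ₂, 0 ≤ p.1 ∧ p.1 ≤ 2 := by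
    intro p hp
    obtain ⟨t, ht0', ht1', h1, h2⟩ := mem_seg_iff.1 (hσ₂seg hp)
    norm_num at h1
    constructor <;> linarith
  -- the vertex (1,1)
  have h11 : ((1,1) : Pt) ∈ Δ := by
    have hσ₁cl : IsClosed σ₁ := by
      apply IsClosed.inter hcomp.isClosed
      exact isClosed_eq ((continuous_const.mul continuous_fst).add (continuous_const.mul continuous_snd)) continuous_const
    have hσ₁cp : IsCompact σ₁ := hcomp.of_isClosed_subset hσ₁cl (fun p hp => hp.1)
    obtain ⟨w, hwσ, hwmin'⟩ := hσ₁cp.exists_isMinOn ⟨v, hvσ₁⟩ continuous_fst.continuousOn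
    have hwmin : ∀ p ∈ σ₁, w.1 ≤ p.1 := fun p hp => hwmin' hp
    set τ : Set Pt := {p ∈ σ₁ | 1 * p.1 + 0 * p.2 = w.1} with hτdef
    have hwτ : w ∈ τ := ⟨hwσ, by norm_num⟩
    have hτw : τ = {w} := by
      apply Set.eq_singleton_iff_unique_mem.2 ⟨hwτ, ?_⟩
      rintro p ⟨hpσ, hp1⟩
      have e1 : p.1 = w.1 := by linarith
      have e2 : p.2 = 1 := by have := hpσ.2; linarith
      have e3 : w.2 = 1 := by have := hwσ.2; linarith
      exact Prod.ext e1 (by rw [e2, e3])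
    have hfaceτ : IsFaceOf {w} Δ := by
      rw [← hτw]
      refine ⟨⟨w, hwτ⟩, convex_minset hface₁.2.1 1 0 w.1, IsExtreme.trans hface₁.2.2 ?_⟩
      exact isExtreme_minset 1 0 w.1 (fun p hp => by have := hwmin p hp; linarith)
    obtain ⟨hXwmem, hXwdim, hXwsub⟩ := hXf {w} hfaceτ
    have hwX : w ∈ X {w} := hXwsub rfl
    have hw2 : w.2 = 1 := by have := hwσ.2; linarith
    have hw1a : 1 ≤ w.1 := (hσ₁x w hwσ).1
    have hw1b : w.1 ≤ 2 - δ := hwmin _ hp₁σ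
    have hw : w = ((1,1) : Pt) := by
      rcases forced_pt hXwmem (by rw [hXwdim, setDim_singleton]) hwX with h|h|h|h|h|h
      · exfalso; rw [h] at hw2; norm_num at hw2
      · exfalso; rw [h] at hw2; norm_num at hw2
      · exact h
      · exfalso; rw [h] at hw1b; norm_num at hw1b; linarith
      · exfalso; rw [h] at hw2; norm_num at hw2
      · exfalso; rw [h] at hw2; norm_num at hw2
    rw [← hw]; exact hwσ.1
  -- the vertex (0,3)
  have h03 : ((0,3) : Pt) ∈ Δ := by
    have hσ₂cl : IsClosed σ₂ := by
      apply IsClosed.inter hcomp.isClosed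
      exact isClosed_eq ((continuous_const.mul continuous_fst).add (continuous_const.mul continuous_snd)) continuous_const
    have hσ₂cp : IsCompact σ₂ := hcomp.of_isClosed_subset hσ₂cl (fun p hp => hp.1)
    obtain ⟨w, hwσ, hwmin'⟩ := hσ₂cp.exists_isMinOn ⟨v, hvσ₂⟩ continuous_fst.continuousOn
    have hwmin : ∀ p ∈ σ₂, w.1 ≤ p.1 := fun p hp => hwmin' hp
    set τ : Set Pt := {p ∈ σ₂ | 1 * p.1 + 0 * p.2 = w.1} with hτdef
    have hwτ : w ∈ τ := ⟨hwσ, by norm_num⟩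
    have hτw : τ = {w} := by
      apply Set.eq_singleton_iff_unique_mem.2 ⟨hwτ, ?_⟩
      rintro p ⟨hpσ, hp1⟩
      have e1 : p.1 = w.1 := by linarith
      have e2 : p.2 = 3 - p.1 := by have := hpσ.2; linarith
      have e3 : w.2 = 3 - w.1 := by have := hwσ.2; linarith
      exact Prod.ext e1 (by rw [e2, e3, e1])
    have hfaceτ : IsFaceOf {w} Δ := by
      rw [← hτw]
      refine ⟨⟨w, hwτ⟩, convex_minset hface₂.2.1 1 0 w.1, IsExtreme.trans hface₂.2.2 ?_⟩
      exact isExtreme_minset 1 0 w.1 (fun p hp => by have := hwmin p hp; linarith)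
    obtain ⟨hXwmem, hXwdim, hXwsub⟩ := hXf {w} hfaceτ
    have hwX : w ∈ X {w} := hXwsub rfl
    have hw2 : w.2 = 3 - w.1 := by have := hwσ.2; linarith
    have hw1a : 0 ≤ w.1 := (hσ₂x w hwσ).1
    have hw1b : w.1 ≤ 2 - δ := hwmin _ hp₂σ
    have hw : w = ((0,3) : Pt) := by
      rcases forced_pt hXwmem (by rw [hXwdim, setDim_singleton]) hwX with h|h|h|h|h|h
      · exfalso; rw [h] at hw2; norm_num at hw2
      · exfalso; rw [h] at hw2; norm_num at hw2
      · exfalso; rw [h] at hw2; norm_num at hw2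
      · exfalso; rw [h] at hw1b; norm_num at hw1b; linarith
      · exact h
      · exfalso; rw [h] at hw2; norm_num at hw2
    rw [← hw]; exact hwσ.1
  -- final contradiction
  by_cases hcase : ∀ p ∈ Δ, 3 ≤ 2 * p.1 + 1 * p.2
  · -- the face through (1,1) and (0,3)
    set σ₇ : Set Pt := {p ∈ Δ | 2 * p.1 + 1 * p.2 = 3} with hσ₇def
    have h11σ : ((1,1) : Pt) ∈ σ₇ := ⟨h11, by norm_num⟩
    have h03σ : ((0,3) : Pt) ∈ σ₇ := ⟨h03, by norm_num⟩
    have hface₇ : IsFaceOf σ₇ Δ := isFaceOf_minset hconvΔ 2 1 3 hcase ⟨_, h11σ⟩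
    have hdim₇ : setDim σ₇ = 1 := by
      refine le_antisymm ?_ (one_le_setDim h11σ h03σ (by norm_num [Prod.ext_iff]))
      apply setDim_le_one (d := ((1, -2) : Pt))
      intro x hx y hy
      refine ⟨x.1 - y.1, Prod.ext (by norm_num) ?_⟩
      have h1 := hx.2; have h2 := hy.2
      norm_num [Prod.smul_def]
      linarith
    obtain ⟨hX₇mem, hX₇dim, hX₇sub⟩ := hXf σ₇ hface₇
    exact kill_11_03 hX₇mem (by rw [hX₇dim, hdim₇]) (hX₇sub h11σ) (hX₇sub h03σ)
  · push_neg at hcase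
    obtain ⟨z, hzΔ, hz⟩ := hcase
    have hFsub : (F : Set Pt) ⊆ Δ := hΔF ▸ subset_convexHull ℝ _
    have hq0 : ∃ q ∈ F, 2 * q.1 + 1 * q.2 < 3 := by
      by_contra hcon
      push_neg at hcon
      have hsub : Δ ⊆ {p : Pt | 3 ≤ 2 * p.1 + 1 * p.2} := by
        rw [hΔF]
        exact convexHull_min (fun q hq => hcon q hq) (convex_halfplane 2 1 3)
      exact absurd (hsub hzΔ) (by simpa using not_le.2 hz)
    obtain ⟨q0, hq0F, hq0lt⟩ := hq0
    set F' : Finset Pt := F.filter (fun q => q.1 < 1) with hF'def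
    have hq0F' : q0 ∈ F' := by
      rw [hF'def, Finset.mem_filter]
      refine ⟨hq0F, ?_⟩
      have := (hΔC q0 (hFsub hq0F)).1
      linarith
    have hF'ne : F'.Nonempty := ⟨q0, hq0F'⟩
    have hF'mem : ∀ q ∈ F', q ∈ Δ ∧ q.1 < 1 ∧ 1 < q.2 := by
      intro q hq
      rw [hF'def, Finset.mem_filter] at hq
      have hqΔ : q ∈ Δ := hFsub hq.1
      have hq2 : 1 ≤ q.2 := (hΔC q hqΔ).1
      refine ⟨hqΔ, hq.2, lt_of_le_of_ne hq2 ?_⟩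
      intro heq
      have hqσ₁ : q ∈ σ₁ := ⟨hqΔ, by rw [← heq]; ring⟩
      have := (hσ₁x q hqσ₁).1
      linarith [hq.2]
    obtain ⟨qs, hqsF', hqsK⟩ := Finset.exists_mem_eq_inf' hF'ne (fun q => (q.2 - 1)/(1 - q.1))
    obtain ⟨hqsΔ, hqs1, hqs2⟩ := hF'mem qs hqsF'
    obtain ⟨K, hK0, hKqs, hKle⟩ : ∃ K : ℝ, 0 < K ∧ K * (1 - qs.1) = qs.2 - 1 ∧
        ∀ q ∈ F', K ≤ (q.2 - 1)/(1 - q.1) := by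
      refine ⟨F'.inf' hF'ne (fun q => (q.2 - 1)/(1 - q.1)), ?_, ?_, ?_⟩
      · rw [hqsK]; exact div_pos (by linarith) (by linarith)
      · rw [hqsK]; exact div_mul_cancel₀ _ (by intro h; exact absurd h (ne_of_gt (by linarith)))
      · intro q hq; exact Finset.inf'_le _ hq
    have hminF : ∀ q ∈ (F : Set Pt), q ∈ {p : Pt | K + 1 ≤ K * p.1 + 1 * p.2} := by
      intro q hqF
      have hqΔ : q ∈ Δ := hFsub hqF
      have hq2 : 1 ≤ q.2 := (hΔC q hqΔ).1
      rcases lt_or_ge q.1 1 with hlt | hge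
      · have hqF' : q ∈ F' := by rw [hF'def, Finset.mem_filter]; exact ⟨hqF, hlt⟩
        have := (le_div_iff₀ (by linarith : (0:ℝ) < 1 - q.1)).1 (hKle q hqF')
        simp only [Set.mem_setOf_eq]
        linarith
      · simp only [Set.mem_setOf_eq]
        linarith [mul_le_mul_of_nonneg_left hge hK0.le]
    have hmin₉ : ∀ p ∈ Δ, K + 1 ≤ K * p.1 + 1 * p.2 := by
      intro p hp
      have : Δ ⊆ {p : Pt | K + 1 ≤ K * p.1 + 1 * p.2} := by
        rw [hΔF]
        exact convexHull_min hminF (convex_halfplane K 1 (K+1))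
      exact this hp
    set σ₉ : Set Pt := {p ∈ Δ | K * p.1 + 1 * p.2 = K + 1} with hσ₉def
    have h11σ : ((1,1) : Pt) ∈ σ₉ := ⟨h11, by norm_num⟩
    have hqsσ : qs ∈ σ₉ := ⟨hqsΔ, by linarith [hKqs]⟩
    have hface₉ : IsFaceOf σ₉ Δ := isFaceOf_minset hconvΔ K 1 (K+1) hmin₉ ⟨_, h11σ⟩
    have hdim₉ : setDim σ₉ = 1 := by
      refine le_antisymm ?_ (one_le_setDim h11σ hqsσ ?_)
      · apply setDim_le_one (d := ((1, -K) : Pt))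
        intro x hx y hy
        refine ⟨x.1 - y.1, Prod.ext (by norm_num) ?_⟩
        have h1 := hx.2; have h2 := hy.2
        norm_num [Prod.smul_def]
        linarith
      · intro h
        rw [Prod.ext_iff] at h
        have := h.1; norm_num at this; linarith
    obtain ⟨hX₉mem, hX₉dim, hX₉sub⟩ := hXf σ₉ hface₉
    exact kill_11_q hX₉mem (by rw [hX₉dim, hdim₉]) (hX₉sub h11σ) (hX₉sub hqsσ) hqs1 hqs2

end Part1

section Part2

/-- The cone. -/
def Cs : Set Pt := {p : Pt | 1 ≤ p.2 ∧ p.1 + p.2 ≤ 3}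

lemma cone_face_dim0 {σ : Set Pt} (hface : IsFaceOf σ Cs) (h0 : setDim σ = 0) :
    σ = {((2,1) : Pt)} := by
  obtain ⟨⟨p, hpσ⟩, hconv, hext⟩ := hface
  have hpC : p ∈ Cs := hext.1 hpσ
  have hpv : p = ((2,1) : Pt) := by
    by_contra hne
    have hp2 : 1 ≤ p.2 := hpC.1
    have hp3 : p.1 + p.2 ≤ 3 := hpC.2
    rcases eq_or_lt_of_le hp2 with heq | hlt
    · -- p.2 = 1 , p.1 < 2
      have hp1 : p.1 < 2 := by
        rcases lt_or_eq_of_le (by linarith : p.1 ≤ 2) with h | h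
        · exact h
        · exact absurd (Prod.ext h heq.symm) hne
      set t : ℝ := 2 - p.1 with htdef
      have ht0 : 0 < t := by linarith
      set x₁ : Pt := (p.1 + t, 1) with hx₁def
      set x₂ : Pt := (p.1 - t, 1) with hx₂def
      have hx₁C : x₁ ∈ Cs := ⟨le_refl 1, by simp only [hx₁def]; norm_num; linarith⟩
      have hx₂C : x₂ ∈ Cs := ⟨le_refl 1, by simp only [hx₂def]; norm_num; linarith⟩
      have hopen : p ∈ openSegment ℝ x₁ x₂ := by
        refine ⟨1/2, 1/2, by norm_num, by norm_num, by norm_num, ?_⟩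
        apply Prod.ext <;> simp [hx₁def, hx₂def, Prod.smul_def, smul_eq_mul] <;> linarith
      have hx₁σ := hext.2 hx₁C hx₂C hpσ hopen
      have := setDim_subsingleton h0 hx₁σ hpσ
      rw [hx₁def, Prod.ext_iff] at this
      have := this.1
      norm_num at this
      linarith
    · -- p.2 > 1
      set t : ℝ := p.2 - 1 with htdef
      have ht0 : 0 < t := by linarith
      set x₁ : Pt := (p.1 + t, p.2 - t) with hx₁def
      set x₂ : Pt := (p.1 - t, p.2 + t) with hx₂def
      have hx₁C : x₁ ∈ Cs := ⟨by simp only [hx₁def]; norm_num; linarith,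
        by simp only [hx₁def]; norm_num; linarith⟩
      have hx₂C : x₂ ∈ Cs := ⟨by simp only [hx₂def]; norm_num; linarith,
        by simp only [hx₂def]; norm_num; linarith⟩
      have hopen : p ∈ openSegment ℝ x₁ x₂ := by
        refine ⟨1/2, 1/2, by norm_num, by norm_num, by norm_num, ?_⟩
        apply Prod.ext <;> simp [hx₁def, hx₂def, Prod.smul_def, smul_eq_mul] <;> linarith
      have hx₁σ := hext.2 hx₁C hx₂C hpσ hopen
      have := setDim_subsingleton h0 hx₁σ hpσ
      rw [hx₁def, Prod.ext_iff] at this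
      have := this.1
      norm_num at this
      linarith
  subst hpv
  apply Set.eq_singleton_iff_unique_mem.2 ⟨hpσ, fun q hq => setDim_subsingleton h0 hq hpσ⟩

lemma cone_absorb {σ : Set Pt} (hconv : Convex ℝ σ) (hext : IsExtreme ℝ Cs σ)
    {x : Pt} (hxσ : x ∈ σ) (hx2 : 1 < x.2) (hx3 : x.1 + x.2 < 3) : σ = Cs := by
  refine Set.Subset.antisymm hext.1 ?_
  intro y hyC
  set A : ℝ := |x.2 - y.2| with hAdef
  set B : ℝ := |x.1 + x.2 - y.1 - y.2| with hBdef
  have hA0 : 0 ≤ A := abs_nonneg _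
  have hB0 : 0 ≤ B := abs_nonneg _
  set t : ℝ := min ((x.2 - 1)/(A + 1)) ((3 - x.1 - x.2)/(B + 1)) with htdef
  have ht0 : 0 < t := lt_min (div_pos (by linarith) (by linarith))
    (div_pos (by linarith) (by linarith))
  have htA : t * A ≤ x.2 - 1 := by
    have h1 : t * A ≤ ((x.2 - 1)/(A + 1)) * A :=
      mul_le_mul_of_nonneg_right (min_le_left _ _) hA0
    have h2 : ((x.2 - 1)/(A + 1)) * A ≤ x.2 - 1 := by
      rw [div_mul_eq_mul_div, div_le_iff₀ (by linarith)]
      nlinarith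
    linarith
  have htB : t * B ≤ 3 - x.1 - x.2 := by
    have h1 : t * B ≤ ((3 - x.1 - x.2)/(B + 1)) * B :=
      mul_le_mul_of_nonneg_right (min_le_right _ _) hB0
    have h2 : ((3 - x.1 - x.2)/(B + 1)) * B ≤ 3 - x.1 - x.2 := by
      rw [div_mul_eq_mul_div, div_le_iff₀ (by linarith)]
      nlinarith
    linarith
  set x' : Pt := (x.1 + t * (x.1 - y.1), x.2 + t * (x.2 - y.2)) with hx'def
  have hx'C : x' ∈ Cs := by
    constructor
    · show 1 ≤ x.2 + t * (x.2 - y.2)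
      have h1 : t * (-(A)) ≤ t * (x.2 - y.2) :=
        mul_le_mul_of_nonneg_left (neg_abs_le _) ht0.le
      have h2 : t * (-A) = -(t * A) := by ring
      linarith
    · show x.1 + t * (x.1 - y.1) + (x.2 + t * (x.2 - y.2)) ≤ 3
      have h1 : t * (x.1 + x.2 - y.1 - y.2) ≤ t * B :=
        mul_le_mul_of_nonneg_left (le_abs_self _) ht0.le
      nlinarith
  have hopen : x ∈ openSegment ℝ y x' := by
    refine ⟨t/(1+t), 1/(1+t), div_pos ht0 (by linarith), by positivity, ?_, ?_⟩
    · field_simp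
      ring
    · apply Prod.ext
      · show (t/(1+t)) * y.1 + (1/(1+t)) * (x.1 + t * (x.1 - y.1)) = x.1
        field_simp; ring
      · show (t/(1+t)) * y.2 + (1/(1+t)) * (x.2 + t * (x.2 - y.2)) = x.2
        field_simp; ring
  exact hext.2 hyC hx'C hxσ hopen

lemma setDim_Cs : setDim Cs = 2 := by
  refine setDim_eq_two (p := ((2,1):Pt)) (q := ((1,1):Pt)) (r := ((1,2):Pt))
    (by constructor <;> norm_num) (by constructor <;> norm_num)
    (by constructor <;> norm_num) ?_
  norm_num [Prod.fst_sub, Prod.snd_sub]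

lemma cone_face_dim1 {σ : Set Pt} (hface : IsFaceOf σ Cs) (h1 : setDim σ = 1) :
    (∀ p ∈ σ, p.2 = 1) ∨ (∀ p ∈ σ, p.1 + p.2 = 3) := by
  obtain ⟨hne, hconv, hext⟩ := hface
  have hbd : ∀ x ∈ σ, x.2 = 1 ∨ x.1 + x.2 = 3 := by
    intro x hx
    by_contra hcon
    push_neg at hcon
    have hxC : x ∈ Cs := hext.1 hx
    have hx2 : 1 < x.2 := lt_of_le_of_ne hxC.1 (Ne.symm hcon.1)
    have hx3 : x.1 + x.2 < 3 := lt_of_le_of_ne hxC.2 hcon.2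
    have hσC := cone_absorb hconv hext hx hx2 hx3
    rw [hσC, setDim_Cs] at h1
    omega
  by_cases hall : ∀ p ∈ σ, p.2 = 1
  · exact Or.inl hall
  · push_neg at hall
    obtain ⟨a, haσ, ha2⟩ := hall
    have haC : a ∈ Cs := hext.1 haσ
    have ha2' : 1 < a.2 := lt_of_le_of_ne haC.1 (Ne.symm ha2)
    have ha3 : a.1 + a.2 = 3 := (hbd a haσ).resolve_left ha2
    refine Or.inr fun p hp => ?_
    rcases hbd p hp with hp2 | hp3
    · -- p.2 = 1; show p.1 + p.2 = 3, else midpoint is interior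
      by_contra hps
      have hpC : p ∈ Cs := hext.1 hp
      have hps' : p.1 + p.2 < 3 := lt_of_le_of_ne hpC.2 hps
      set m : Pt := (1/2 : ℝ) • a + (1/2 : ℝ) • p with hmdef
      have hmσ : m ∈ σ := hconv haσ hp (by norm_num) (by norm_num) (by norm_num)
      have hm1 : m.1 = (a.1 + p.1)/2 := by
        simp [hmdef, Prod.smul_def, smul_eq_mul]; ring
      have hm2 : m.2 = (a.2 + p.2)/2 := by
        simp [hmdef, Prod.smul_def, smul_eq_mul]; ring
      rcases hbd m hmσ with h | h
      · rw [hm2] at h; linarith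
      · rw [hm1, hm2] at h; linarith
    · exact hp3

lemma near_seg1 {p : Pt} (hpC : p ∈ Cs) (hp2 : p.2 = 1) (hd : dist p ((2,1) : Pt) < 1/2) :
    p ∈ segment ℝ ((1,1):Pt) ((2,1):Pt) := by
  rw [Prod.dist_eq, max_lt_iff, Real.dist_eq, Real.dist_eq] at hd
  have h1 : |p.1 - 2| < 1/2 := by simpa using hd.1
  rw [abs_lt] at h1
  have hp1 : p.1 ≤ 2 := by have := hpC.2; linarith
  rw [mem_seg_iff]
  refine ⟨p.1 - 1, by norm_num <;> linarith, by norm_num <;> linarith,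
    by norm_num <;> linarith, by norm_num <;> linarith⟩

lemma near_seg2 {p : Pt} (hpC : p ∈ Cs) (hp3 : p.1 + p.2 = 3) (hd : dist p ((2,1) : Pt) < 1/2) :
    p ∈ segment ℝ ((2,1):Pt) ((0,3):Pt) := by
  rw [Prod.dist_eq, max_lt_iff, Real.dist_eq, Real.dist_eq] at hd
  have h2 : |p.2 - 1| < 1/2 := by simpa using hd.2
  rw [abs_lt] at h2
  have hp2 : 1 ≤ p.2 := hpC.1
  rw [mem_seg_iff]
  refine ⟨(p.2 - 1)/2, by norm_num <;> linarith, by norm_num <;> linarith,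
    by norm_num <;> linarith, by norm_num <;> linarith⟩

lemma near_Q {p : Pt} (hpC : p ∈ Cs) (hd : dist p ((2,1) : Pt) < 1/2) :
    p ∈ convexHull ℝ {((0, 0) : Pt), ((4, 0) : Pt), ((1, 3) : Pt), ((0, 3) : Pt)} := by
  rw [Prod.dist_eq, max_lt_iff, Real.dist_eq, Real.dist_eq] at hd
  have h1 : |p.1 - 2| < 1/2 := by simpa using hd.1
  have h2 : |p.2 - 1| < 1/2 := by simpa using hd.2
  rw [abs_lt] at h1 h2
  have hp2 : 1 ≤ p.2 := hpC.1
  have hp1 : p.1 ≤ 2 := by have := hpC.2; linarith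
  refine mem_hull3 (p1 := ((0,0):Pt)) (p2 := ((4,0):Pt)) (p3 := ((0,3):Pt))
    (by norm_num) (by norm_num) (by norm_num)
    (a := 1 - p.1/4 - p.2/3) (b := p.1/4) (c := p.2/3) (by linarith) (by linarith)
    (by linarith) (by ring) ?_
  apply Prod.ext
  · show p.1 = (1 - p.1/4 - p.2/3) * 0 + (p.1/4) * 4 + (p.2/3) * 0
    ring
  · show p.2 = (1 - p.1/4 - p.2/3) * 0 + (p.1/4) * 0 + (p.2/3) * 3
    ring

lemma hvQ : ((2,1) : Pt) ∈ convexHull ℝ {((0, 0) : Pt), ((4, 0) : Pt), ((1, 3) : Pt), ((0, 3) : Pt)} := by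
  refine mem_hull3 (p1 := ((0,0):Pt)) (p2 := ((4,0):Pt)) (p3 := ((1,3):Pt))
    (by norm_num) (by norm_num) (by norm_num)
    (a := 1/4) (b := 5/12) (c := 1/3) (by norm_num) (by norm_num) (by norm_num) (by norm_num) ?_
  apply Prod.ext
  · show (2:ℝ) = (1/4) * 0 + (5/12) * 4 + (1/3) * 1
    norm_num
  · show (1:ℝ) = (1/4) * 0 + (5/12) * 0 + (1/3) * 3
    norm_num

lemma h11Q : ((1,1) : Pt) ∈ convexHull ℝ {((0, 0) : Pt), ((4, 0) : Pt), ((1, 3) : Pt), ((0, 3) : Pt)} := by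
  refine mem_hull3 (p1 := ((0,0):Pt)) (p2 := ((4,0):Pt)) (p3 := ((1,3):Pt))
    (by norm_num) (by norm_num) (by norm_num)
    (a := 1/2) (b := 1/6) (c := 1/3) (by norm_num) (by norm_num) (by norm_num) (by norm_num) ?_
  apply Prod.ext
  · show (1:ℝ) = (1/2) * 0 + (1/6) * 4 + (1/3) * 1
    norm_num
  · show (1:ℝ) = (1/2) * 0 + (1/6) * 0 + (1/3) * 3
    norm_num

lemma h03Q : ((0,3) : Pt) ∈ convexHull ℝ {((0, 0) : Pt), ((4, 0) : Pt), ((1, 3) : Pt), ((0, 3) : Pt)} :=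
  subset_convexHull ℝ _ (by norm_num)

end Part2

section XrayMem

lemma memX_v : ({((2,1) : Pt)} : Set Pt) ∈ Xray0 := by
  simp only [Xray0, Set.mem_insert_iff, Set.mem_singleton_iff]; tauto

lemma memX_S1 : segment ℝ ((1,1):Pt) ((2,1):Pt) ∈ Xray0 := by
  simp only [Xray0, Set.mem_insert_iff, Set.mem_singleton_iff]; tauto

lemma memX_S2 : segment ℝ ((2,1):Pt) ((0,3):Pt) ∈ Xray0 := by
  simp only [Xray0, Set.mem_insert_iff, Set.mem_singleton_iff]; tauto

lemma memX_Q : convexHull ℝ {((0, 0) : Pt), ((4, 0) : Pt), ((1, 3) : Pt), ((0, 3) : Pt)} ∈ Xray0 := by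
  simp only [Xray0, Set.mem_insert_iff, Set.mem_singleton_iff]; tauto

end XrayMem

/-- No convex polytope `Δ ⊆ ℝ²` that is an extension of the cone
`C = {(x,y) : y ≥ 1 ∧ x + y ≤ 3}` is compatible with the x-ray `𝒳₀`;
consequently, `𝒳₀` does not satisfy the extension criterion. -/
theorem Xray0_not_extension_criterion :
    (∀ Δ : Set Pt, IsPolytope Δ →
      IsExtensionOf Δ {p : Pt | 1 ≤ p.2 ∧ p.1 + p.2 ≤ 3} ((2, 1) : Pt) →
      ¬ PolyCompat Xray0 Δ) ∧
    ¬ ExtensionCriterion Xray0 := by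
  classical
  refine ⟨noPoly, ?_⟩
  intro hEC
  -- the cone is a strictly convex cone with vertex (2,1)
  have hcone : IsConeWithVertex Cs ((2,1) : Pt) := by
    refine ⟨?_, ?_, ⟨by norm_num, by norm_num⟩, ?_⟩
    · have heq : Cs = {p : Pt | 1 ≤ p.2} ∩ {p : Pt | p.1 + p.2 ≤ 3} := rfl
      rw [heq]
      exact (isClosed_le continuous_const continuous_snd).inter
        (isClosed_le (continuous_fst.add continuous_snd) continuous_const)
    · have heq : Cs = {p : Pt | 1 ≤ 0 * p.1 + 1 * p.2} ∩
          {p : Pt | -3 ≤ (-1) * p.1 + (-1) * p.2} := by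
        ext p
        simp only [Cs, Set.mem_setOf_eq, Set.mem_inter_iff]
        constructor
        · rintro ⟨h1, h2⟩; exact ⟨by linarith, by linarith⟩
        · rintro ⟨h1, h2⟩; exact ⟨by linarith, by linarith⟩
      rw [heq]
      exact (convex_halfplane 0 1 1).inter (convex_halfplane (-1) (-1) (-3))
    · rintro x ⟨hx1, hx2⟩ a ha
      have hfst : (((2,1) : Pt) + a • (x - (2,1))).1 = 2 + a * (x.1 - 2) := by
        simp [Prod.smul_def, smul_eq_mul]
      have hsnd : (((2,1) : Pt) + a • (x - (2,1))).2 = 1 + a * (x.2 - 1) := by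
        simp [Prod.smul_def, smul_eq_mul]
      constructor
      · rw [hsnd]
        nlinarith [mul_nonneg ha (by linarith : (0:ℝ) ≤ x.2 - 1)]
      · rw [hfst, hsnd]
        nlinarith [mul_nonneg ha (by linarith : (0:ℝ) ≤ 3 - x.1 - x.2)]
  -- it contains no line
  have hline : ContainsNoLine Cs := by
    rintro ⟨p, d, hd, hall⟩
    have h2 : d.2 = 0 := by
      by_contra hne
      have hmem := (hall ((0 - p.2)/d.2)).1
      have hsnd : ((p + ((0 - p.2)/d.2) • d) : Pt).2 = p.2 + ((0 - p.2)/d.2) * d.2 := by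
        simp [Prod.smul_def, smul_eq_mul]
      rw [hsnd, div_mul_cancel₀ _ hne] at hmem
      linarith
    have h1 : d.1 = 0 := by
      by_contra hne
      have hs : d.1 + d.2 ≠ 0 := by rw [h2]; simpa using hne
      have hmem := (hall ((4 - p.1 - p.2)/(d.1 + d.2))).2
      have hc : ((p + ((4 - p.1 - p.2)/(d.1 + d.2)) • d) : Pt).1
          + ((p + ((4 - p.1 - p.2)/(d.1 + d.2)) • d) : Pt).2
          = p.1 + p.2 + ((4 - p.1 - p.2)/(d.1 + d.2)) * (d.1 + d.2) := by
        simp [Prod.smul_def, smul_eq_mul]; ring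
      rw [hc, div_mul_cancel₀ _ hs] at hmem
      linarith
    exact hd (Prod.ext h1 h2)
  -- it is compatible with the x-ray
  have hcompat : ConeCompat Xray0 Cs ((2,1) : Pt) := by
    refine ⟨Metric.ball ((2,1) : Pt) (1/2), Metric.ball_mem_nhds _ (by norm_num), ?_⟩
    set XF : Set Pt → Set Pt := fun σ => if setDim σ = 0 then ({((2,1) : Pt)} : Set Pt)
      else if setDim σ = 1 then
        (if σ ⊆ {p : Pt | p.2 = 1} then segment ℝ ((1,1):Pt) ((2,1):Pt)
          else segment ℝ ((2,1):Pt) ((0,3):Pt))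
      else convexHull ℝ {((0, 0) : Pt), ((4, 0) : Pt), ((1, 3) : Pt), ((0, 3) : Pt)}
      with hXFdef
    have ev0 : ∀ σ : Set Pt, setDim σ = 0 → XF σ = ({((2,1) : Pt)} : Set Pt) := by
      intro σ h; simp only [hXFdef]; rw [if_pos h]
    have ev1a : ∀ σ : Set Pt, setDim σ = 1 → σ ⊆ {p : Pt | p.2 = 1} →
        XF σ = segment ℝ ((1,1):Pt) ((2,1):Pt) := by
      intro σ h h'; simp only [hXFdef]; rw [if_neg (by omega), if_pos h, if_pos h']
    have ev1b : ∀ σ : Set Pt, setDim σ = 1 → ¬ σ ⊆ {p : Pt | p.2 = 1} →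
        XF σ = segment ℝ ((2,1):Pt) ((0,3):Pt) := by
      intro σ h h'; simp only [hXFdef]; rw [if_neg (by omega), if_pos h, if_neg h']
    have ev2 : ∀ σ : Set Pt, setDim σ = 2 → XF σ =
        convexHull ℝ {((0, 0) : Pt), ((4, 0) : Pt), ((1, 3) : Pt), ((0, 3) : Pt)} := by
      intro σ h; simp only [hXFdef]; rw [if_neg (by omega), if_neg (by omega)]
    have hvS1 : ((2,1) : Pt) ∈ segment ℝ ((1,1):Pt) ((2,1):Pt) := by
      rw [mem_seg_iff]
      exact ⟨1, by norm_num, by norm_num, by norm_num, by norm_num⟩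
    have hvS2 : ((2,1) : Pt) ∈ segment ℝ ((2,1):Pt) ((0,3):Pt) := by
      rw [mem_seg_iff]
      exact ⟨0, by norm_num, by norm_num, by norm_num, by norm_num⟩
    refine ⟨XF, ?_, ?_⟩
    · intro σ hface
      have hd2 := setDim_le_two σ
      have hcases : setDim σ = 0 ∨ setDim σ = 1 ∨ setDim σ = 2 := by omega
      rcases hcases with h0 | h1 | h2
      · have hσv := cone_face_dim0 hface h0
        rw [ev0 σ h0]
        refine ⟨memX_v, ?_, ?_⟩
        · rw [setDim_singleton, h0]
        · rw [hσv]; exact fun x hx => hx.1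
      · rcases cone_face_dim1 hface h1 with hA | hB
        · rw [ev1a σ h1 (fun p hp => hA p hp)]
          refine ⟨memX_S1, ?_, ?_⟩
          · rw [setDim_segment (by norm_num [Prod.ext_iff]), h1]
          · rintro p ⟨hpσ, hpU⟩
            exact near_seg1 (hface.2.2.1 hpσ) (hA p hpσ) (Metric.mem_ball.1 hpU)
        · by_cases hc : σ ⊆ {p : Pt | p.2 = 1}
          · rw [ev1a σ h1 hc]
            refine ⟨memX_S1, ?_, ?_⟩
            · rw [setDim_segment (by norm_num [Prod.ext_iff]), h1]
            · rintro p ⟨hpσ, hpU⟩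
              exact near_seg1 (hface.2.2.1 hpσ) (hc hpσ) (Metric.mem_ball.1 hpU)
          · rw [ev1b σ h1 hc]
            refine ⟨memX_S2, ?_, ?_⟩
            · rw [setDim_segment (by norm_num [Prod.ext_iff]), h1]
            · rintro p ⟨hpσ, hpU⟩
              exact near_seg2 (hface.2.2.1 hpσ) (hB p hpσ) (Metric.mem_ball.1 hpU)
      · rw [ev2 σ h2]
        refine ⟨memX_Q, ?_, ?_⟩
        · rw [setDim_Q0, h2]
        · rintro p ⟨hpσ, hpU⟩
          exact near_Q (hface.2.2.1 hpσ) (Metric.mem_ball.1 hpU)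
    · intro σ σ' hf hf' hsub
      have hmono := setDim_mono hsub
      have hd2 := setDim_le_two σ
      have hd2' := setDim_le_two σ'
      have hcases : setDim σ = 0 ∨ setDim σ = 1 ∨ setDim σ = 2 := by omega
      have hcases' : setDim σ' = 0 ∨ setDim σ' = 1 ∨ setDim σ' = 2 := by omega
      rcases hcases with h0 | h1 | h2
      · rw [ev0 σ h0, Set.singleton_subset_iff]
        rcases hcases' with h0' | h1' | h2'
        · rw [ev0 σ' h0']; exact rfl
        · by_cases hc' : σ' ⊆ {p : Pt | p.2 = 1}
          · rw [ev1a σ' h1' hc']; exact hvS1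
          · rw [ev1b σ' h1' hc']; exact hvS2
        · rw [ev2 σ' h2']; exact hvQ
      · rcases hcases' with h0' | h1' | h2'
        · omega
        · by_cases hc' : σ' ⊆ {p : Pt | p.2 = 1}
          · rw [ev1a σ' h1' hc', ev1a σ h1 (hsub.trans hc')]
          · rw [ev1b σ' h1' hc']
            by_cases hc : σ ⊆ {p : Pt | p.2 = 1}
            · exfalso
              rcases cone_face_dim1 hf' h1' with hA' | hB'
              · exact hc' (fun p hp => hA' p hp)
              · have hsubv : σ ⊆ ({((2,1) : Pt)} : Set Pt) := by
                  intro p hp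
                  have e1 : p.2 = 1 := hc hp
                  have e2 : p.1 + p.2 = 3 := hB' p (hsub hp)
                  have : p = ((2,1) : Pt) := Prod.ext (show p.1 = 2 by linarith) e1
                  simpa using this
                have := setDim_mono hsubv
                rw [setDim_singleton] at this
                omega
            · rw [ev1b σ h1 hc]
        · rw [ev2 σ' h2']
          by_cases hc : σ ⊆ {p : Pt | p.2 = 1}
          · rw [ev1a σ h1 hc]; exact seg_subset h11Q hvQ
          · rw [ev1b σ h1 hc]; exact seg_subset hvQ h03Q
      · rcases hcases' with h0' | h1' | h2'
        · omega
        · omega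
        · rw [ev2 σ h2, ev2 σ' h2']
  obtain ⟨Δ, hpoly, hext, hpc⟩ := hEC Cs ((2,1) : Pt) hcone hline hcompat
  exact noPoly Δ hpoly hext hpc
end
end

section
/- For all real numbers s, t with 0 < s and 2s < t, the x-ray 𝒳(s,t) does not satisfy the extension criterion; indeed the strictly convex cone {(x,y) ∈ ℝ² : y ≥ s and x + y ≤ t}, with vertex (t−s, s), is compatible with 𝒳(s,t) but does not extend to any convex polytope compatible with 𝒳(s,t). -/
open Set

noncomputable section

/-- The parametrized x-ray `𝒳(s,t)` of Section 5 of the paper: the possible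
x-rays of the manifold `M` for other invariant symplectic forms, determined
by the image `(s,t)` of the fixed point `F'`. -/
def XrayST (s t : ℝ) : Set (Set Pt) :=
  { {((0, 0) : Pt)}, {((s + t, 0) : Pt)}, {((s, s) : Pt)}, {((t - s, s) : Pt)},
    {((0, t) : Pt)}, {((s, t) : Pt)},
    segment ℝ ((0, 0) : Pt) ((0, t) : Pt),
    segment ℝ ((0, 0) : Pt) ((s + t, 0) : Pt),
    segment ℝ ((0, t) : Pt) ((s, t) : Pt),
    segment ℝ ((s, t) : Pt) ((s + t, 0) : Pt),
    segment ℝ ((0, 0) : Pt) ((s, s) : Pt),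
    segment ℝ ((s, s) : Pt) ((t - s, s) : Pt),
    segment ℝ ((s, s) : Pt) ((s, t) : Pt),
    segment ℝ ((t - s, s) : Pt) ((s + t, 0) : Pt),
    segment ℝ ((t - s, s) : Pt) ((0, t) : Pt),
    convexHull ℝ {((0, 0) : Pt), ((s + t, 0) : Pt), ((s, s) : Pt),
      ((t - s, s) : Pt), ((0, t) : Pt), ((s, t) : Pt)} }



lemma finrank_Pt : Module.finrank ℝ Pt = 2 := by
  simp [Module.finrank_prod]

lemma one_le_setDim_s4 {S : Set Pt} {u w : Pt} (hu : u ∈ S) (hw : w ∈ S) (h : u ≠ w) :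
    1 ≤ setDim S := by
  have h1 : u - w ∈ vectorSpan ℝ S := by
    simpa [vsub_eq_sub] using vsub_mem_vectorSpan ℝ hu hw
  have h2 : Submodule.span ℝ ({u - w} : Set Pt) ≤ vectorSpan ℝ S := by
    rw [Submodule.span_le, Set.singleton_subset_iff]; exact h1
  have h3 : Module.finrank ℝ (Submodule.span ℝ ({u - w} : Set Pt)) = 1 :=
    finrank_span_singleton (sub_ne_zero.2 h)
  unfold setDim
  rw [direction_affineSpan]
  calc 1 = _ := h3.symm
    _ ≤ _ := Submodule.finrank_mono h2

lemma setDim_le_one' {S : Set Pt} (α β c : ℝ) {w : Pt} (hw : α * w.1 + β * w.2 ≠ 0)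
    (hS : ∀ p ∈ S, α * p.1 + β * p.2 = c) : setDim S ≤ 1 := by
  set f : Pt →ₗ[ℝ] ℝ := α • LinearMap.fst ℝ ℝ ℝ + β • LinearMap.snd ℝ ℝ ℝ with hf
  have hfapp : ∀ p : Pt, f p = α * p.1 + β * p.2 := by intro p; simp [hf, smul_eq_mul]
  have hker : vectorSpan ℝ S ≤ LinearMap.ker f := by
    rw [vectorSpan_def]
    apply Submodule.span_le.2
    rintro x ⟨p, hp, q, hq, rfl⟩
    have : f (p -ᵥ q) = 0 := by
      have : f p - f q = 0 := by rw [hfapp, hfapp, hS p hp, hS q hq]; ring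
      simpa [vsub_eq_sub, map_sub] using this
    exact this
  have hsurj : LinearMap.range f = ⊤ := by
    rw [LinearMap.range_eq_top]
    intro y
    refine ⟨(y / (α * w.1 + β * w.2)) • w, ?_⟩
    rw [map_smul, hfapp, smul_eq_mul, div_mul_cancel₀ _ hw]
  have hrn := LinearMap.finrank_range_add_finrank_ker f
  rw [hsurj, finrank_top] at hrn
  have hker1 : Module.finrank ℝ (LinearMap.ker f) ≤ 1 := by
    have h1 : Module.finrank ℝ ℝ = 1 := Module.finrank_self ℝ
    rw [finrank_Pt] at hrn; omega
  unfold setDim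
  rw [direction_affineSpan]
  exact le_trans (Submodule.finrank_mono hker) hker1

lemma setDim_eq_two' {S : Set Pt} {a b : ℝ} (ha : a ≠ 0) (hb : b ≠ 0)
    (h1 : ((a,0):Pt) ∈ vectorSpan ℝ S) (h2 : ((0,b):Pt) ∈ vectorSpan ℝ S) : setDim S = 2 := by
  have htop : vectorSpan ℝ S = ⊤ := by
    rw [eq_top_iff]
    rintro ⟨x, y⟩ -
    have h := Submodule.add_mem _ (Submodule.smul_mem _ (x/a) h1) (Submodule.smul_mem _ (y/b) h2)
    have : (x/a) • ((a,0):Pt) + (y/b) • ((0,b):Pt) = ((x,y):Pt) := by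
      simp [Prod.smul_mk, Prod.mk_add_mk, div_mul_cancel₀, ha, hb]
    rwa [this] at h
  unfold setDim
  rw [direction_affineSpan, htop, finrank_top, finrank_Pt]

lemma mem_seg {u w p : Pt} (θ : ℝ) (h0 : 0 ≤ θ) (h1 : θ ≤ 1)
    (hx : p.1 = (1-θ) * u.1 + θ * w.1) (hy : p.2 = (1-θ) * u.2 + θ * w.2) :
    p ∈ segment ℝ u w := by
  refine ⟨1-θ, θ, by linarith, h0, by ring, ?_⟩
  apply Prod.ext <;> simp [Prod.fst_add, Prod.snd_add, smul_eq_mul, hx, hy]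

lemma seg_mem {u w p : Pt} (hp : p ∈ segment ℝ u w) :
    ∃ θ : ℝ, 0 ≤ θ ∧ θ ≤ 1 ∧ p.1 = (1-θ)*u.1 + θ*w.1 ∧ p.2 = (1-θ)*u.2 + θ*w.2 := by
  obtain ⟨a, b, ha, hb, hab, h⟩ := hp
  have ha' : a = 1 - b := by linarith
  refine ⟨b, hb, by linarith, ?_, ?_⟩ <;>
  · rw [← h, ha']; simp [Prod.fst_add, Prod.snd_add, smul_eq_mul]


lemma mem_ball_iff {p c : Pt} {ε : ℝ} :
    p ∈ Metric.ball c ε ↔ |p.1 - c.1| < ε ∧ |p.2 - c.2| < ε := by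
  rw [Metric.mem_ball, Prod.dist_eq, max_lt_iff]
  simp [Real.dist_eq]

section
variable (s t : ℝ)

lemma part1 (hs : 0 < s) (hst : 2*s < t) :
    IsClosed {p : Pt | s ≤ p.2 ∧ p.1 + p.2 ≤ t} ∧ Convex ℝ {p : Pt | s ≤ p.2 ∧ p.1 + p.2 ≤ t} ∧
    ((t-s, s) : Pt) ∈ {p : Pt | s ≤ p.2 ∧ p.1 + p.2 ≤ t} ∧
    ∀ x ∈ {p : Pt | s ≤ p.2 ∧ p.1 + p.2 ≤ t}, ∀ a : ℝ, 0 ≤ a →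
      ((t-s, s) : Pt) + a • (x - ((t-s, s):Pt)) ∈ {p : Pt | s ≤ p.2 ∧ p.1 + p.2 ≤ t} := by
  refine ⟨?_, ?_, ?_, ?_⟩
  · exact (isClosed_le continuous_const continuous_snd).inter
      (isClosed_le (continuous_fst.add continuous_snd) continuous_const)
  · rintro x ⟨hx1, hx2⟩ y ⟨hy1, hy2⟩ a b ha hb hab
    constructor
    · show s ≤ (a • x + b • y).2
      simp only [Prod.snd_add, Prod.smul_snd, smul_eq_mul]
      nlinarith
    · show (a • x + b • y).1 + (a • x + b • y).2 ≤ t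
      simp only [Prod.fst_add, Prod.snd_add, Prod.smul_fst, Prod.smul_snd, smul_eq_mul]
      nlinarith
  · exact ⟨le_refl s, by simp⟩
  · rintro x ⟨hx1, hx2⟩ a ha
    constructor
    · show s ≤ ((t-s,s) + a • (x - ((t-s,s):Pt))).2
      simp only [Prod.snd_add, Prod.smul_snd, Prod.snd_sub, smul_eq_mul]
      nlinarith
    · show ((t-s,s) + a • (x - ((t-s,s):Pt))).1 + ((t-s,s) + a • (x - ((t-s,s):Pt))).2 ≤ t
      simp only [Prod.fst_add, Prod.snd_add, Prod.smul_fst, Prod.smul_snd, Prod.fst_sub,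
        Prod.snd_sub, smul_eq_mul]
      nlinarith

lemma part2 : ¬ ∃ p d : Pt, d ≠ 0 ∧ ∀ r : ℝ, p + r • d ∈ {p : Pt | s ≤ p.2 ∧ p.1 + p.2 ≤ t} := by
  rintro ⟨p, d, hd, h⟩
  have h2 : ∀ r : ℝ, s ≤ p.2 + r * d.2 := fun r => by
    have := (h r).1
    simpa [Prod.snd_add, Prod.smul_snd, smul_eq_mul] using this
  have h1 : ∀ r : ℝ, p.1 + r * d.1 + (p.2 + r * d.2) ≤ t := fun r => by
    have := (h r).2
    simpa [Prod.fst_add, Prod.snd_add, Prod.smul_fst, Prod.smul_snd, smul_eq_mul] using this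
  have hd2 : d.2 = 0 := by
    by_contra hd2
    have := h2 ((s - 1 - p.2) / d.2)
    rw [div_mul_cancel₀ _ hd2] at this
    linarith
  have hd1 : d.1 = 0 := by
    by_contra hd1
    have := h1 ((t + 1 - p.1 - p.2) / d.1)
    rw [div_mul_cancel₀ _ hd1, hd2] at this
    linarith
  exact hd (Prod.ext hd1 hd2)

end

section
variable {s t : ℝ}

def hexPts (s t : ℝ) : Set Pt :=
  {((0, 0) : Pt), ((s + t, 0) : Pt), ((s, s) : Pt), ((t - s, s) : Pt), ((0, t) : Pt), ((s, t) : Pt)}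

lemma ball_subset_hex (hs : 0 < s) (hst : 2*s < t) :
    Metric.ball ((t-s, s) : Pt) (min (s/2) (t-2*s)) ⊆ convexHull ℝ (hexPts s t) := by
  intro p hp
  rw [mem_ball_iff] at hp
  obtain ⟨hp1, hp2⟩ := hp
  rw [abs_sub_lt_iff] at hp1 hp2
  have hε1 : min (s/2) (t-2*s) ≤ s/2 := min_le_left _ _
  have hx0 : 0 < p.1 := by
    have := hp1.2; simp only at this ⊢; linarith [min_le_left (s/2) (t-2*s)]
  have hy0 : 0 < p.2 := by have := hp2.2; simp only at this; linarith
  have hyt : p.2 < t := by have := hp2.1; simp only at this; linarith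
  have hsum : p.1 + p.2 < s + t := by
    have h1 := hp1.1; have h2 := hp2.1; simp only at h1 h2; linarith
  have ht0 : t ≠ 0 := by linarith
  have hden : 0 < s + t - p.2 := by linarith
  have hden0 : s + t - p.2 ≠ 0 := ne_of_gt hden
  set μ := p.2 / t with hμ
  set lam := p.1 / (s + t - p.2) with hlam
  have hμ0 : 0 ≤ μ := div_nonneg hy0.le (by linarith)
  have hμ1 : μ ≤ 1 := by rw [hμ, div_le_one (by linarith)]; linarith
  have hlam0 : 0 ≤ lam := div_nonneg hx0.le hden.le
  have hlam1 : lam ≤ 1 := by rw [hlam, div_le_one hden]; linarith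
  have hconv := convex_convexHull ℝ (hexPts s t)
  have hA : ((0,0):Pt) ∈ convexHull ℝ (hexPts s t) := subset_convexHull ℝ _ (by left; rfl)
  have hB : ((s+t,0):Pt) ∈ convexHull ℝ (hexPts s t) := subset_convexHull ℝ _ (by right; left; rfl)
  have hE : ((0,t):Pt) ∈ convexHull ℝ (hexPts s t) :=
    subset_convexHull ℝ _ (by right; right; right; right; left; rfl)
  have hF : ((s,t):Pt) ∈ convexHull ℝ (hexPts s t) :=
    subset_convexHull ℝ _ (by right; right; right; right; right; rfl)
  have hP1 : ((0, p.2) : Pt) ∈ convexHull ℝ (hexPts s t) :=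
    hconv.segment_subset hA hE (mem_seg μ hμ0 hμ1 (by simp) (by
      show p.2 = (1-μ)*0 + μ*t
      rw [hμ]; field_simp [ht0]; ring))
  have hP2 : ((s + t - p.2, p.2) : Pt) ∈ convexHull ℝ (hexPts s t) :=
    hconv.segment_subset hB hF (mem_seg μ hμ0 hμ1 (by
      show s + t - p.2 = (1-μ)*(s+t) + μ*s
      rw [hμ]; field_simp [ht0]; ring) (by
      show p.2 = (1-μ)*0 + μ*t
      rw [hμ]; field_simp [ht0]; ring))
  exact hconv.segment_subset hP1 hP2 (mem_seg lam hlam0 hlam1 (by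
      show p.1 = (1-lam)*0 + lam*(s+t-p.2)
      rw [hlam]; field_simp [hden0]; ring) (by simp; ring))

end

section
variable {s t : ℝ}

lemma mid_mem_openSegment {x1 x2 p : Pt} (hx : p.1 = (x1.1 + x2.1)/2)
    (hy : p.2 = (x1.2 + x2.2)/2) : p ∈ openSegment ℝ x1 x2 := by
  refine ⟨1/2, 1/2, by norm_num, by norm_num, by norm_num, ?_⟩
  apply Prod.ext <;>
    simp only [Prod.fst_add, Prod.snd_add, Prod.smul_fst, Prod.smul_snd, smul_eq_mul, hx, hy] <;>
    ring

lemma hex_mem_xray : convexHull ℝ (hexPts s t) ∈ XrayST s t := by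
  simp [XrayST, hexPts]

lemma vmem_hex : ((t-s, s) : Pt) ∈ convexHull ℝ (hexPts s t) :=
  subset_convexHull ℝ _ (by right; right; right; left; rfl)

lemma ssmem_hex : ((s, s) : Pt) ∈ convexHull ℝ (hexPts s t) :=
  subset_convexHull ℝ _ (by right; right; left; rfl)

lemma otmem_hex : ((0, t) : Pt) ∈ convexHull ℝ (hexPts s t) :=
  subset_convexHull ℝ _ (by right; right; right; right; left; rfl)

lemma seg1_dim (hs : 0 < s) (hst : 2*s < t) :
    setDim (segment ℝ ((s,s):Pt) ((t-s,s):Pt)) = 1 := by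
  refine le_antisymm (setDim_le_one' 0 1 s (w := ((0,1):Pt)) (by norm_num) ?_) ?_
  · intro q hq
    obtain ⟨θ, _, _, _, hy⟩ := seg_mem hq
    simp only at hy
    simp only [zero_mul, one_mul, zero_add, hy]
    ring
  · exact one_le_setDim_s4 (left_mem_segment ℝ _ _) (right_mem_segment ℝ _ _)
      (by intro h; rw [Prod.mk.injEq] at h; linarith [h.1])

lemma seg2_dim (hs : 0 < s) (hst : 2*s < t) :
    setDim (segment ℝ ((t-s,s):Pt) ((0,t):Pt)) = 1 := by
  refine le_antisymm (setDim_le_one' 1 1 t (w := ((1,1):Pt)) (by norm_num) ?_) ?_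
  · intro q hq
    obtain ⟨θ, _, _, hx, hy⟩ := seg_mem hq
    simp only at hx hy
    rw [hx, hy]; ring
  · exact one_le_setDim_s4 (left_mem_segment ℝ _ _) (right_mem_segment ℝ _ _)
      (by intro h; rw [Prod.mk.injEq] at h; linarith [h.1])

lemma hex_dim (hs : 0 < s) (hst : 2*s < t) : setDim (convexHull ℝ (hexPts s t)) = 2 := by
  have h0 : ((0,0):Pt) ∈ convexHull ℝ (hexPts s t) := subset_convexHull ℝ _ (by left; rfl)
  have hB : ((s+t,0):Pt) ∈ convexHull ℝ (hexPts s t) := subset_convexHull ℝ _ (by right; left; rfl)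
  have h1 : ((s+t, 0) : Pt) ∈ vectorSpan ℝ (convexHull ℝ (hexPts s t)) := by
    have := vsub_mem_vectorSpan ℝ hB h0
    simpa [vsub_eq_sub] using this
  have h2 : ((0, t) : Pt) ∈ vectorSpan ℝ (convexHull ℝ (hexPts s t)) := by
    have := vsub_mem_vectorSpan ℝ otmem_hex h0
    simpa [vsub_eq_sub] using this
  exact setDim_eq_two' (by linarith) (by linarith) h1 h2

open Classical in
lemma part3 (hs : 0 < s) (hst : 2*s < t) :
    ConeCompat (XrayST s t) {p : Pt | s ≤ p.2 ∧ p.1 + p.2 ≤ t} ((t-s,s) : Pt) := by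
  unfold ConeCompat
  set v : Pt := ((t-s, s) : Pt) with hvdef
  set C : Set Pt := {p : Pt | s ≤ p.2 ∧ p.1 + p.2 ≤ t} with hCdef
  set L1 : Set Pt := {p : Pt | p.2 = s} with hL1def
  set L2 : Set Pt := {p : Pt | p.1 + p.2 = t} with hL2def
  set ε : ℝ := min (s/2) (t-2*s) with hεdef
  have hε : 0 < ε := lt_min (by linarith) (by linarith)
  have hε1 : ε ≤ s/2 := min_le_left _ _
  have hε2 : ε ≤ t - 2*s := min_le_right _ _
  have hvC : v ∈ C := ⟨le_refl s, by simp [hvdef]⟩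
  refine ⟨Metric.ball v ε, Metric.ball_mem_nhds v hε,
    (fun σ => if σ ⊆ {v} then {v}
      else if σ ⊆ L1 then segment ℝ ((s,s):Pt) ((t-s,s):Pt)
      else if σ ⊆ L2 then segment ℝ ((t-s,s):Pt) ((0,t):Pt)
      else convexHull ℝ (hexPts s t)), ?_, ?_⟩
  · rintro σ ⟨⟨p0, hp0⟩, hconv, hext⟩
    have hσC : σ ⊆ C := hext.1
    beta_reduce
    split_ifs with h1 h2 h3
    · -- σ = {v}
      have hσv : σ = {v} := subset_antisymm h1 (by
        rw [Set.singleton_subset_iff, ← h1 hp0]; exact hp0)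
      refine ⟨by simp [XrayST, hvdef], by rw [hσv], fun q hq => h1 hq.1⟩
    · -- σ ⊆ L1
      obtain ⟨p, hpσ, hpv⟩ := Set.not_subset.1 h1
      have hpC := hσC hpσ
      have hp2 : p.2 = s := h2 hpσ
      have hp1lt : p.1 < t - s := by
        rcases lt_or_eq_of_le (show p.1 ≤ t - s by have := hpC.2; linarith) with h | h
        · exact h
        · exact absurd (by apply Prod.ext <;> simp [h, hp2, hvdef]) hpv
      have hx1C : ((p.1 - (t - s - p.1), s) : Pt) ∈ C := ⟨le_refl s, by simp; linarith⟩
      have hmem := hext.2 hx1C hvC hpσ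
        (mid_mem_openSegment (by simp; ring) (by simp [hp2, hvdef]))
      have hd1 : 1 ≤ setDim σ := one_le_setDim_s4 hmem hpσ (by
        intro h
        have := congrArg Prod.fst h
        simp only at this
        linarith)
      have hd2 : setDim σ ≤ 1 := setDim_le_one' 0 1 s (w := ((0,1):Pt)) (by norm_num)
        (fun q hq => by simp only [zero_mul, one_mul, zero_add]; exact h2 hq)
      refine ⟨by simp [XrayST], ?_, ?_⟩
      · rw [seg1_dim hs hst, le_antisymm hd2 hd1]
      · rintro q ⟨hqσ, hqU⟩
        have hq2 : q.2 = s := h2 hqσ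
        have hqC := hσC hqσ
        have hqle : q.1 ≤ t - s := by have := hqC.2; linarith
        have hqge : s ≤ q.1 := by
          rw [mem_ball_iff] at hqU
          have := (abs_sub_lt_iff.1 hqU.1).2
          simp only [hvdef] at this
          linarith
        refine mem_seg ((q.1 - s)/(t - 2*s)) (div_nonneg (by linarith) (by linarith))
          ((div_le_one (by linarith)).2 (by linarith)) ?_ ?_
        · show q.1 = (1 - (q.1 - s)/(t - 2*s))*s + (q.1 - s)/(t - 2*s)*(t - s)
          have h := div_mul_cancel₀ (q.1 - s) (show t - 2*s ≠ 0 by linarith)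
          linear_combination (-1 : ℝ) * h
        · show q.2 = (1 - (q.1 - s)/(t - 2*s))*s + (q.1 - s)/(t - 2*s)*s
          rw [hq2]; ring
    · -- σ ⊆ L2
      obtain ⟨p, hpσ, hpv⟩ := Set.not_subset.1 h1
      have hpC := hσC hpσ
      have hpsum : p.1 + p.2 = t := h3 hpσ
      have hp2gt : s < p.2 := by
        rcases lt_or_eq_of_le hpC.1 with h | h
        · exact h
        · exact absurd (by apply Prod.ext <;> simp [← h, hvdef] <;> linarith) hpv
      have hx2C : ((p.1 - (p.2 - s), p.2 + (p.2 - s)) : Pt) ∈ C := ⟨by simp; linarith, by simp; linarith⟩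
      have hmem := hext.right_mem_of_mem_openSegment hvC hx2C hpσ
        (mid_mem_openSegment (by simp; linarith) (by simp; linarith))
      have hd1 : 1 ≤ setDim σ := one_le_setDim_s4 hmem hpσ (by
        intro h
        have := congrArg Prod.snd h
        simp only at this
        linarith)
      have hd2 : setDim σ ≤ 1 := setDim_le_one' 1 1 t (w := ((1,1):Pt)) (by norm_num)
        (fun q hq => by simp only [one_mul]; exact h3 hq)
      refine ⟨by simp [XrayST], ?_, ?_⟩
      · rw [seg2_dim hs hst, le_antisymm hd2 hd1]
      · rintro q ⟨hqσ, hqU⟩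
        have hqsum : q.1 + q.2 = t := h3 hqσ
        have hqge : s ≤ q.2 := (hσC hqσ).1
        have hqlt : q.2 ≤ t - s := by
          rw [mem_ball_iff] at hqU
          have := (abs_sub_lt_iff.1 hqU.2).1
          simp only [hvdef] at this
          linarith
        refine mem_seg ((q.2 - s)/(t - s)) (div_nonneg (by linarith) (by linarith))
          ((div_le_one (by linarith)).2 (by linarith)) ?_ ?_
        · show q.1 = (1 - (q.2 - s)/(t - s))*(t - s) + (q.2 - s)/(t - s)*0
          have h := div_mul_cancel₀ (q.2 - s) (show t - s ≠ 0 by linarith)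
          linear_combination hqsum + h
        · show q.2 = (1 - (q.2 - s)/(t - s))*s + (q.2 - s)/(t - s)*t
          have h := div_mul_cancel₀ (q.2 - s) (show t - s ≠ 0 by linarith)
          linear_combination (-1 : ℝ) * h
    · -- 2-dimensional face
      obtain ⟨p, hpσ, hp2⟩ := Set.not_subset.1 h2
      obtain ⟨q, hqσ, hq3⟩ := Set.not_subset.1 h3
      have hp2' : s < p.2 := lt_of_le_of_ne (hσC hpσ).1 (fun h => hp2 h.symm)
      have hq3' : q.1 + q.2 < t := lt_of_le_of_ne (hσC hqσ).2 hq3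
      have hq2' : s ≤ q.2 := (hσC hqσ).1
      have hp3' : p.1 + p.2 ≤ t := (hσC hpσ).2
      set m : Pt := ((p.1+q.1)/2, (p.2+q.2)/2) with hmdef
      have hmσ : m ∈ σ := by
        have := hconv hpσ hqσ (by norm_num : (0:ℝ) ≤ 1/2) (by norm_num : (0:ℝ) ≤ 1/2) (by norm_num)
        have he : (1/2 : ℝ) • p + (1/2 : ℝ) • q = m := by
          apply Prod.ext <;>
            simp only [hmdef, Prod.fst_add, Prod.snd_add, Prod.smul_fst, Prod.smul_snd,
              smul_eq_mul] <;> ring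
        rwa [he] at this
      have hm2 : s < m.2 := by simp only [hmdef]; linarith
      have hm3 : m.1 + m.2 < t := by simp only [hmdef]; linarith
      set δ : ℝ := (min (m.2 - s) (t - m.1 - m.2))/2 with hδdef
      have hδ0 : 0 < δ := by
        apply div_pos _ (by norm_num)
        exact lt_min (by linarith) (by linarith)
      have hδa : δ ≤ (m.2 - s)/2 := by
        have h := min_le_left (m.2 - s) (t - m.1 - m.2); rw [hδdef]; gcongr
      have hδb : δ ≤ (t - m.1 - m.2)/2 := by
        have h := min_le_right (m.2 - s) (t - m.1 - m.2); rw [hδdef]; gcongr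
      have hx1C : ((m.1 - δ, m.2) : Pt) ∈ C := ⟨by simp; linarith, by simp; linarith⟩
      have hx2C : ((m.1 + δ, m.2) : Pt) ∈ C := ⟨by simp; linarith, by simp; linarith⟩
      have hy1C : ((m.1, m.2 - δ) : Pt) ∈ C := ⟨by simp; linarith, by simp; linarith⟩
      have hy2C : ((m.1, m.2 + δ) : Pt) ∈ C := ⟨by simp; linarith, by simp; linarith⟩
      have hx := And.intro (hext.2 hx1C hx2C hmσ (mid_mem_openSegment (by simp; try ring) (by simp; try ring))) (hext.right_mem_of_mem_openSegment hx1C hx2C hmσ (mid_mem_openSegment (by simp; try ring) (by simp; try ring)))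
      have hy := And.intro (hext.2 hy1C hy2C hmσ (mid_mem_openSegment (by simp; try ring) (by simp; try ring))) (hext.right_mem_of_mem_openSegment hy1C hy2C hmσ (mid_mem_openSegment (by simp; try ring) (by simp; try ring)))
      have hvs1 : ((2*δ, 0) : Pt) ∈ vectorSpan ℝ σ := by
        have := vsub_mem_vectorSpan ℝ hx.2 hx.1
        have he : ((m.1 + δ, m.2) : Pt) -ᵥ ((m.1 - δ, m.2) : Pt) = ((2*δ, 0) : Pt) := by
          rw [vsub_eq_sub, Prod.mk_sub_mk]
          norm_num
          ring
        rwa [he] at this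
      have hvs2 : ((0, 2*δ) : Pt) ∈ vectorSpan ℝ σ := by
        have := vsub_mem_vectorSpan ℝ hy.2 hy.1
        have he : ((m.1, m.2 + δ) : Pt) -ᵥ ((m.1, m.2 - δ) : Pt) = ((0, 2*δ) : Pt) := by
          rw [vsub_eq_sub, Prod.mk_sub_mk]
          norm_num
          ring
        rwa [he] at this
      refine ⟨hex_mem_xray, ?_, fun q hq => ball_subset_hex hs hst hq.2⟩
      rw [hex_dim hs hst, setDim_eq_two' (by linarith) (by linarith) hvs1 hvs2]
  · intro σ σ' hσ hσ' hss
    beta_reduce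
    by_cases h1 : σ ⊆ {v}
    · rw [if_pos h1]
      rw [Set.singleton_subset_iff]
      split_ifs with g1 g2 g3
      · exact Set.mem_singleton v
      · exact right_mem_segment ℝ _ _
      · exact left_mem_segment ℝ _ _
      · exact vmem_hex
    · have h1' : ¬ σ' ⊆ {v} := fun h => h1 (hss.trans h)
      rw [if_neg h1, if_neg h1']
      by_cases h2 : σ ⊆ L1
      · rw [if_pos h2]
        by_cases g2 : σ' ⊆ L1
        · rw [if_pos g2]
        · rw [if_neg g2]
          by_cases g3 : σ' ⊆ L2
          · exfalso
            apply h1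
            intro p hp
            have e1 : p.2 = s := h2 hp
            have e2 : p.1 + p.2 = t := g3 (hss hp)
            have : p = v := by apply Prod.ext <;> simp [hvdef] <;> linarith
            rw [this]; rfl
          · rw [if_neg g3]
            exact (convex_convexHull ℝ _).segment_subset ssmem_hex vmem_hex
      · rw [if_neg h2]
        have g2 : ¬ σ' ⊆ L1 := fun h => h2 (hss.trans h)
        rw [if_neg g2]
        by_cases h3 : σ ⊆ L2
        · rw [if_pos h3]
          by_cases g3 : σ' ⊆ L2
          · rw [if_pos g3]
          · rw [if_neg g3]
            exact (convex_convexHull ℝ _).segment_subset vmem_hex otmem_hex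
        · rw [if_neg h3]
          have g3 : ¬ σ' ⊆ L2 := fun h => h3 (hss.trans h)
          rw [if_neg g3]


lemma line_convex (α β c : ℝ) : Convex ℝ {p : Pt | α*p.1 + β*p.2 = c} := by
  rintro x hx y hy a b ha hb hab
  simp only [Set.mem_setOf_eq] at hx hy ⊢
  simp only [Prod.fst_add, Prod.snd_add, Prod.smul_fst, Prod.smul_snd, smul_eq_mul]
  linear_combination a*hx + b*hy + c*hab

lemma line_closed (α β c : ℝ) : IsClosed {p : Pt | α*p.1 + β*p.2 = c} :=
  isClosed_eq ((continuous_const.mul continuous_fst).add (continuous_const.mul continuous_snd))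
    continuous_const

lemma halfplane_convex (α β c : ℝ) : Convex ℝ {p : Pt | c ≤ α*p.1 + β*p.2} := by
  rintro x hx y hy a b ha hb hab
  simp only [Set.mem_setOf_eq] at hx hy ⊢
  simp only [Prod.fst_add, Prod.snd_add, Prod.smul_fst, Prod.smul_snd, smul_eq_mul]
  have hc : a*c + b*c = c := by rw [← add_mul, hab, one_mul]
  nlinarith [mul_le_mul_of_nonneg_left hx ha, mul_le_mul_of_nonneg_left hy hb, hc]

lemma halfplane_closed (α β c : ℝ) : IsClosed {p : Pt | c ≤ α*p.1 + β*p.2} :=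
  isClosed_le continuous_const
    ((continuous_const.mul continuous_fst).add (continuous_const.mul continuous_snd))

set_option maxHeartbeats 1000000 in
lemma part4 (hs : 0 < s) (hst : 2*s < t) :
    ∀ Δ : Set Pt, IsPolytope Δ →
      IsExtensionOf Δ {p : Pt | s ≤ p.2 ∧ p.1 + p.2 ≤ t} ((t - s, s) : Pt) →
      ¬ PolyCompat (XrayST s t) Δ := by
  rintro Δ ⟨F, hFne, hFΔ⟩ ⟨U, hU, hCU⟩ ⟨X, hX, hXmono⟩
  set v : Pt := ((t - s, s) : Pt) with hvdef
  set C : Set Pt := {p : Pt | s ≤ p.2 ∧ p.1 + p.2 ≤ t} with hCdef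
  have hΔconv : Convex ℝ Δ := by rw [hFΔ]; exact convex_convexHull ℝ _
  have hΔcomp : IsCompact Δ := by rw [hFΔ]; exact F.finite_toSet.isCompact_convexHull ℝ
  obtain ⟨ε', hε', hballU⟩ := Metric.mem_nhds_iff.1 hU
  set δ : ℝ := ε'/2 with hδdef
  have hδ0 : 0 < δ := by positivity
  have hδε : δ < ε' := by rw [hδdef]; linarith
  have key : ∀ p ∈ C, p ∈ Metric.ball v ε' → p ∈ Δ := by
    intro p hp hb
    exact (hCU.subset (⟨hp, hballU hb⟩ : p ∈ C ∩ U)).1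
  have key2 : ∀ p ∈ Δ, p ∈ Metric.ball v ε' → p ∈ C := by
    intro p hp hb
    exact (hCU.symm.subset (⟨hp, hballU hb⟩ : p ∈ Δ ∩ U)).1
  have hvC : v ∈ C := ⟨le_refl s, by simp [hvdef]⟩
  have hvΔ : v ∈ Δ := key v hvC (Metric.mem_ball_self hε')
  have hqC : ((t-s-δ, s) : Pt) ∈ C := ⟨le_refl s, by simp; linarith⟩
  have hqΔ : ((t-s-δ, s) : Pt) ∈ Δ := by
    refine key _ hqC (mem_ball_iff.2 ⟨?_, ?_⟩)
    · show |t-s-δ - (t-s)| < ε'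
      rw [abs_lt]; constructor <;> linarith
    · show |s - s| < ε'
      rw [abs_lt]; constructor <;> linarith
  have hq'C : ((t-s-δ, s+δ/2) : Pt) ∈ C := ⟨by simp; linarith, by simp; linarith⟩
  have hq'Δ : ((t-s-δ, s+δ/2) : Pt) ∈ Δ := by
    refine key _ hq'C (mem_ball_iff.2 ⟨?_, ?_⟩)
    · show |t-s-δ - (t-s)| < ε'
      rw [abs_lt]; constructor <;> linarith
    · show |s+δ/2 - s| < ε'
      rw [abs_lt]; constructor <;> linarith
  -- Δ ⊆ C
  have hΔC : Δ ⊆ C := by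
    intro p hpΔ
    set D : ℝ := |p.1 - (t-s)| + |p.2 - s| + 1 with hDdef
    have hD0 : 0 < D := by positivity
    have hD1 : |p.1 - (t-s)| ≤ D := by
      rw [hDdef]; have := abs_nonneg (p.2 - s); linarith
    have hD2 : |p.2 - s| ≤ D := by
      rw [hDdef]; have := abs_nonneg (p.1 - (t-s)); linarith
    set r : ℝ := min (ε'/(2*D)) 1 with hrdef
    have hr0 : 0 < r := lt_min (by positivity) one_pos
    have hr1 : r ≤ 1 := min_le_right _ _
    have hrD : r ≤ ε'/(2*D) := min_le_left _ _
    set pr : Pt := ((1-r)*(t-s) + r*p.1, (1-r)*s + r*p.2) with hprdef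
    have hprΔ : pr ∈ Δ := by
      have := hΔconv hvΔ hpΔ (by linarith : (0:ℝ) ≤ 1-r) hr0.le (by ring)
      have he : (1-r) • v + r • p = pr := by
        apply Prod.ext
        · show (1-r) * (t-s) + r * p.1 = _
          rfl
        · show (1-r) * s + r * p.2 = _
          rfl
      rwa [he] at this
    have hprB : pr ∈ Metric.ball v ε' := by
      refine mem_ball_iff.2 ⟨?_, ?_⟩
      · show |(1-r)*(t-s) + r*p.1 - (t-s)| < ε'
        rw [show (1-r)*(t-s) + r*p.1 - (t-s) = r * (p.1 - (t-s)) by ring, abs_mul, abs_of_pos hr0]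
        have hb1 : r * |p.1 - (t-s)| ≤ (ε'/(2*D)) * D :=
          mul_le_mul hrD hD1 (abs_nonneg _) (by positivity)
        have he : (ε'/(2*D)) * D = ε'/2 := by field_simp
        linarith
      · show |(1-r)*s + r*p.2 - s| < ε'
        rw [show (1-r)*s + r*p.2 - s = r * (p.2 - s) by ring, abs_mul, abs_of_pos hr0]
        have hb2 : r * |p.2 - s| ≤ (ε'/(2*D)) * D :=
          mul_le_mul hrD hD2 (abs_nonneg _) (by positivity)
        have he : (ε'/(2*D)) * D = ε'/2 := by field_simp
        linarith
    have hprC := key2 pr hprΔ hprB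
    have h1 : s ≤ (1-r)*s + r*p.2 := hprC.1
    have h2 : ((1-r)*(t-s) + r*p.1) + ((1-r)*s + r*p.2) ≤ t := hprC.2
    constructor
    · by_contra hcon
      push_neg at hcon
      nlinarith [mul_pos hr0 (show (0:ℝ) < s - p.2 by linarith)]
    · by_contra hcon
      push_neg at hcon
      nlinarith [mul_pos hr0 (show (0:ℝ) < p.1 + p.2 - t by linarith)]
  -- extreme points are among the three vertices
  have hextpts : ∀ w ∈ Δ.extremePoints ℝ, w = ((s,s):Pt) ∨ w = v ∨ w = ((0,t):Pt) := by
    intro w hw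
    have hface : IsFaceOf {w} Δ :=
      ⟨Set.singleton_nonempty w, convex_singleton w, isExtreme_singleton.2 hw⟩
    obtain ⟨hmem, hdim, hsub⟩ := hX {w} hface
    have hd0 : setDim (X {w}) = 0 := by rw [hdim, setDim_singleton]
    have hwX : w ∈ X {w} := hsub rfl
    have hwC : w ∈ C := hΔC hw.1
    have hsegdim : ∀ u u' : Pt, u ≠ u' → X {w} = segment ℝ u u' → False := by
      intro u u' huu h
      rw [h] at hd0
      have := one_le_setDim_s4 (left_mem_segment ℝ u u') (right_mem_segment ℝ u u') huu
      omega
    simp only [XrayST, Set.mem_insert_iff, Set.mem_singleton_iff] at hmem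
    have hne : ∀ x1 y1 x2 y2 : ℝ, (x1 ≠ x2 ∨ y1 ≠ y2) → ((x1,y1):Pt) ≠ ((x2,y2):Pt) := by
      rintro x1 y1 x2 y2 h hh
      rw [Prod.mk.injEq] at hh
      rcases h with h | h
      · exact h hh.1
      · exact h hh.2
    rcases hmem with h|h|h|h|h|h|h|h|h|h|h|h|h|h|h|h
    · exfalso
      rw [h, Set.mem_singleton_iff] at hwX
      have := hwC.1
      rw [hwX] at this
      simp at this; linarith
    · exfalso
      rw [h, Set.mem_singleton_iff] at hwX
      have := hwC.1
      rw [hwX] at this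
      simp at this; linarith
    · left; rwa [h, Set.mem_singleton_iff] at hwX
    · right; left; rwa [h, Set.mem_singleton_iff] at hwX
    · right; right; rwa [h, Set.mem_singleton_iff] at hwX
    · exfalso
      rw [h, Set.mem_singleton_iff] at hwX
      have := hwC.2
      rw [hwX] at this
      simp at this; linarith
    · exact absurd h (by apply hsegdim; apply hne; right; intro hh; linarith)
    · exact absurd h (by apply hsegdim; apply hne; left; intro hh; linarith)
    · exact absurd h (by apply hsegdim; apply hne; left; intro hh; linarith)
    · exact absurd h (by apply hsegdim; apply hne; left; intro hh; linarith)
    · exact absurd h (by apply hsegdim; apply hne; left; intro hh; linarith)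
    · exact absurd h (by apply hsegdim; apply hne; left; intro hh; linarith)
    · exact absurd h (by apply hsegdim; apply hne; right; intro hh; linarith)
    · exact absurd h (by apply hsegdim; apply hne; right; intro hh; linarith)
    · exact absurd h (by apply hsegdim; apply hne; right; intro hh; linarith)
    · exfalso
      rw [h] at hd0
      have : setDim (convexHull ℝ (hexPts s t)) = 0 := hd0
      rw [hex_dim hs hst] at this
      omega
  have hKM := closure_convexHull_extremePoints hΔcomp hΔconv
  -- the three special points are in Δ
  have haΔ : ((s,s):Pt) ∈ Δ := by
    by_contra ha
    have hsub : Δ.extremePoints ℝ ⊆ {p : Pt | p.1 + p.2 = t} := by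
      intro w hw
      rcases hextpts w hw with h|h|h
      · exact absurd (h ▸ hw.1) ha
      · rw [h]; show (t-s) + s = t; ring
      · rw [h]; show 0 + t = t; ring
    have hline : Δ ⊆ {p : Pt | p.1 + p.2 = t} := by
      rw [← hKM]
      refine closure_minimal (convexHull_min hsub ?_) ?_
      · have := line_convex 1 1 t
        simpa only [one_mul] using this
      · have := line_closed 1 1 t
        simpa only [one_mul] using this
    have := hline hqΔ
    simp only [Set.mem_setOf_eq] at this
    linarith
  have hcΔ : ((0,t):Pt) ∈ Δ := by
    by_contra hc
    have hsub : Δ.extremePoints ℝ ⊆ {p : Pt | p.2 = s} := by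
      intro w hw
      rcases hextpts w hw with h|h|h
      · rw [h]; rfl
      · rw [h]; rfl
      · exact absurd (h ▸ hw.1) hc
    have hline : Δ ⊆ {p : Pt | p.2 = s} := by
      rw [← hKM]
      refine closure_minimal (convexHull_min hsub ?_) ?_
      · have := line_convex 0 1 s
        simpa only [zero_mul, one_mul, zero_add] using this
      · have := line_closed 0 1 s
        simpa only [zero_mul, one_mul, zero_add] using this
    have := hline hq'Δ
    simp only [Set.mem_setOf_eq] at this
    linarith
  -- Δ lies in the halfplane above the line through (s,s) and (0,t)
  have hΔhalf : Δ ⊆ {p : Pt | s*t ≤ (t-s)*p.1 + s*p.2} := by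
    have hsub : Δ.extremePoints ℝ ⊆ {p : Pt | s*t ≤ (t-s)*p.1 + s*p.2} := by
      intro w hw
      rcases hextpts w hw with h|h|h
      · rw [h]; show s*t ≤ (t-s)*s + s*s; nlinarith
      · rw [h]; show s*t ≤ (t-s)*(t-s) + s*s; nlinarith [mul_pos (show (0:ℝ) < t-s by linarith) (show (0:ℝ) < t-2*s by linarith)]
      · rw [h]; show s*t ≤ (t-s)*0 + s*t; nlinarith
    rw [← hKM]
    exact closure_minimal (convexHull_min hsub (halfplane_convex _ _ _)) (halfplane_closed _ _ _)
  -- the face E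
  set E : Set Pt := Δ ∩ {p : Pt | (t-s)*p.1 + s*p.2 = s*t} with hEdef
  have haE : ((s,s):Pt) ∈ E := ⟨haΔ, by show (t-s)*s + s*s = s*t; ring⟩
  have hcE : ((0,t):Pt) ∈ E := ⟨hcΔ, by show (t-s)*0 + s*t = s*t; ring⟩
  have hEface : IsFaceOf E Δ := by
    refine ⟨⟨_, haE⟩, hΔconv.inter (line_convex _ _ _), Set.inter_subset_left, ?_⟩
    rintro x1 hx1 x2 hx2 x ⟨hxΔ, hxL⟩ ⟨α, β, hα, hβ, hαβ, hxo⟩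
    have hf1 : s*t ≤ (t-s)*x1.1 + s*x1.2 := hΔhalf hx1
    have hf2 : s*t ≤ (t-s)*x2.1 + s*x2.2 := hΔhalf hx2
    have hxL' : (t-s)*x.1 + s*x.2 = s*t := hxL
    have he1 : x.1 = α*x1.1 + β*x2.1 := by
      rw [← hxo]; simp [Prod.fst_add, smul_eq_mul]
    have he2 : x.2 = α*x1.2 + β*x2.2 := by
      rw [← hxo]; simp [Prod.snd_add, smul_eq_mul]
    rw [he1, he2] at hxL'
    have hsum : α*(s*t) + β*(s*t) = s*t := by rw [← add_mul, hαβ, one_mul]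
    have hg1 : (t-s)*x1.1 + s*x1.2 = s*t := by
      refine le_antisymm ?_ hf1
      by_contra hcon
      push_neg at hcon
      nlinarith [mul_pos hα (sub_pos.2 hcon), mul_le_mul_of_nonneg_left hf2 hβ.le, hsum]
    have hg2 : (t-s)*x2.1 + s*x2.2 = s*t := by
      refine le_antisymm ?_ hf2
      by_contra hcon
      push_neg at hcon
      nlinarith [mul_pos hβ (sub_pos.2 hcon), mul_le_mul_of_nonneg_left hf1 hα.le, hsum]
    exact ⟨hx1, hg1⟩
  have hEdim : setDim E = 1 := by
    refine le_antisymm (setDim_le_one' (t-s) s (s*t) (w := ((1,1):Pt)) (by simp; linarith) ?_) ?_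
    · intro p hp; exact hp.2
    · exact one_le_setDim_s4 haE hcE (by intro hh; rw [Prod.mk.injEq] at hh; linarith [hh.1])
  obtain ⟨hmem, hdim, hsub⟩ := hX E hEface
  have haX : ((s,s):Pt) ∈ X E := hsub haE
  have hcX : ((0,t):Pt) ∈ X E := hsub hcE
  have hd1 : setDim (X E) = 1 := by rw [hdim, hEdim]
  simp only [XrayST, Set.mem_insert_iff, Set.mem_singleton_iff] at hmem
  rcases hmem with h|h|h|h|h|h|h|h|h|h|h|h|h|h|h|h
  · rw [h, Set.mem_singleton_iff, Prod.mk.injEq] at haX; linarith [haX.1]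
  · rw [h, Set.mem_singleton_iff, Prod.mk.injEq] at haX; linarith [haX.1]
  · rw [h, Set.mem_singleton_iff, Prod.mk.injEq] at hcX; linarith [hcX.1]
  · rw [h, Set.mem_singleton_iff, Prod.mk.injEq] at haX; linarith [haX.1]
  · rw [h, Set.mem_singleton_iff, Prod.mk.injEq] at haX; linarith [haX.1]
  · rw [h, Set.mem_singleton_iff, Prod.mk.injEq] at haX; linarith [haX.2]
  · -- segment (0,0) (0,t)
    rw [h] at haX
    obtain ⟨θ, hθ0, hθ1, h1, h2⟩ := seg_mem haX
    simp only at h1 h2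
    nlinarith
  · -- segment (0,0) (s+t,0)
    rw [h] at haX
    obtain ⟨θ, hθ0, hθ1, h1, h2⟩ := seg_mem haX
    simp only at h1 h2
    nlinarith
  · -- segment (0,t) (s,t)
    rw [h] at haX
    obtain ⟨θ, hθ0, hθ1, h1, h2⟩ := seg_mem haX
    simp only at h1 h2
    nlinarith
  · -- segment (s,t) (s+t,0)
    rw [h] at haX
    obtain ⟨θ, hθ0, hθ1, h1, h2⟩ := seg_mem haX
    simp only at h1 h2
    nlinarith [mul_nonneg hθ0 hs.le]
  · -- segment (0,0) (s,s) : use c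
    rw [h] at hcX
    obtain ⟨θ, hθ0, hθ1, h1, h2⟩ := seg_mem hcX
    simp only at h1 h2
    nlinarith
  · -- segment (s,s) (t-s,s) : use c
    rw [h] at hcX
    obtain ⟨θ, hθ0, hθ1, h1, h2⟩ := seg_mem hcX
    simp only at h1 h2
    nlinarith
  · -- segment (s,s) (s,t) : use c
    rw [h] at hcX
    obtain ⟨θ, hθ0, hθ1, h1, h2⟩ := seg_mem hcX
    simp only at h1 h2
    nlinarith
  · -- segment (t-s,s) (s+t,0) : use a
    rw [h] at haX
    obtain ⟨θ, hθ0, hθ1, h1, h2⟩ := seg_mem haX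
    simp only at h1 h2
    nlinarith [mul_nonneg hθ0 hs.le]
  · -- segment (t-s,s) (0,t) : use a
    rw [h] at haX
    obtain ⟨θ, hθ0, hθ1, h1, h2⟩ := seg_mem haX
    simp only at h1 h2
    nlinarith
  · -- hexagon
    rw [h] at hd1
    have : setDim (convexHull ℝ (hexPts s t)) = 1 := hd1
    rw [hex_dim hs hst] at this
    omega

end

/-- For `0 < s` and `2s < t`, the x-ray `𝒳(s,t)` does not satisfy the
extension criterion; indeed the strictly convex cone
`{(x,y) : y ≥ s ∧ x + y ≤ t}`, with vertex `(t - s, s)`, is compatible with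
`𝒳(s,t)` but does not extend to any convex polytope compatible with
`𝒳(s,t)`. -/
theorem XrayST_not_extension_criterion_of_two_smul_lt (s t : ℝ)
    (hs : 0 < s) (hst : 2 * s < t) :
    IsConeWithVertex {p : Pt | s ≤ p.2 ∧ p.1 + p.2 ≤ t} ((t - s, s) : Pt) ∧
    ContainsNoLine {p : Pt | s ≤ p.2 ∧ p.1 + p.2 ≤ t} ∧
    ConeCompat (XrayST s t) {p : Pt | s ≤ p.2 ∧ p.1 + p.2 ≤ t}
      ((t - s, s) : Pt) ∧
    (∀ Δ : Set Pt, IsPolytope Δ →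
      IsExtensionOf Δ {p : Pt | s ≤ p.2 ∧ p.1 + p.2 ≤ t} ((t - s, s) : Pt) →
      ¬ PolyCompat (XrayST s t) Δ) ∧
    ¬ ExtensionCriterion (XrayST s t) := by
  refine ⟨part1 s t hs hst, part2 s t, part3 hs hst, part4 hs hst, ?_⟩
  intro hEC
  obtain ⟨Δ, hpoly, hext, hcompat⟩ :=
    hEC {p : Pt | s ≤ p.2 ∧ p.1 + p.2 ≤ t} ((t - s, s) : Pt)
      (part1 s t hs hst) (part2 s t) (part3 hs hst)
  exact part4 hs hst Δ hpoly hext hcompat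
end
end

section
/- For all real numbers s, t with 0 < s < t < 2s, the x-ray 𝒳(s,t) does not satisfy the extension criterion; indeed the strictly convex cone {(x,y) ∈ ℝ² : y ≥ 0 and x + 2y ≤ s + t}, with vertex (s+t, 0), is compatible with 𝒳(s,t) but does not extend to any convex polytope compatible with 𝒳(s,t). -/
open Set

noncomputable section

section Helpers
namespace XA

lemma mem_seg {a b p : Pt} :
    p ∈ segment ℝ a b ↔ ∃ u : ℝ, 0 ≤ u ∧ u ≤ 1 ∧
      p.1 = (1-u)*a.1 + u*b.1 ∧ p.2 = (1-u)*a.2 + u*b.2 := by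
  rw [segment_eq_image]
  constructor
  · rintro ⟨u, ⟨h0, h1⟩, rfl⟩
    exact ⟨u, h0, h1, by simp [Prod.fst_add, Prod.smul_fst], by simp [Prod.snd_add, Prod.smul_snd]⟩
  · rintro ⟨u, h0, h1, hx, hy⟩
    refine ⟨u, ⟨h0, h1⟩, ?_⟩
    apply Prod.ext
    · simpa [Prod.fst_add, Prod.smul_fst] using hx.symm
    · simpa [Prod.snd_add, Prod.smul_snd] using hy.symm

lemma setDim_singleton (p : Pt) : setDim {p} = 0 := by
  unfold setDim
  rw [direction_affineSpan, vectorSpan_def]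
  rw [Set.singleton_vsub_singleton]
  simp

lemma setDim_eq_one {σ : Set Pt} (d : Pt) (hd : d ≠ 0) {p q : Pt} (hp : p ∈ σ) (hq : q ∈ σ)
    (hpq : p ≠ q) (hline : ∀ x ∈ σ, ∀ y ∈ σ, ∃ r : ℝ, x - y = r • d) : setDim σ = 1 := by
  unfold setDim
  rw [direction_affineSpan]
  have hle : vectorSpan ℝ σ ≤ Submodule.span ℝ {d} := by
    rw [vectorSpan_def]
    apply Submodule.span_le.2
    rintro x ⟨x1, hx1, x2, hx2, rfl⟩
    obtain ⟨r, hr⟩ := hline x1 hx1 x2 hx2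
    exact Submodule.mem_span_singleton.2 ⟨r, by rw [← hr]; rfl⟩
  have hmem : p - q ∈ vectorSpan ℝ σ := by
    have := vsub_mem_vectorSpan ℝ hp hq
    simpa using this
  obtain ⟨r, hr⟩ := hline p hp q hq
  have hr0 : r ≠ 0 := by
    intro h
    rw [h, zero_smul] at hr
    exact hpq (sub_eq_zero.1 hr)
  have hdmem : d ∈ vectorSpan ℝ σ := by
    have hd2 : d = r⁻¹ • (p - q) := by rw [hr, smul_smul, inv_mul_cancel₀ hr0, one_smul]
    rw [hd2]
    exact Submodule.smul_mem _ _ hmem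
  have hge : Submodule.span ℝ {d} ≤ vectorSpan ℝ σ :=
    Submodule.span_le.2 (Set.singleton_subset_iff.2 hdmem)
  rw [le_antisymm hle hge]
  exact finrank_span_singleton hd

lemma setDim_eq_two {σ : Set Pt} {p u w : Pt} (hp : p ∈ σ) (hu : p + u ∈ σ) (hw : p + w ∈ σ)
    (hdet : u.1*w.2 - u.2*w.1 ≠ 0) : setDim σ = 2 := by
  unfold setDim
  rw [direction_affineSpan]
  have hu' : u ∈ vectorSpan ℝ σ := by
    have := vsub_mem_vectorSpan ℝ hu hp
    simpa using this
  have hw' : w ∈ vectorSpan ℝ σ := by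
    have := vsub_mem_vectorSpan ℝ hw hp
    simpa using this
  have htop : vectorSpan ℝ σ = ⊤ := by
    apply eq_top_iff.2
    intro x _
    have hx : x = ((x.1*w.2 - x.2*w.1)/(u.1*w.2 - u.2*w.1)) • u
        + ((u.1*x.2 - u.2*x.1)/(u.1*w.2 - u.2*w.1)) • w := by
      apply Prod.ext
      · simp only [Prod.fst_add, Prod.smul_fst, smul_eq_mul]
        rw [div_mul_eq_mul_div, div_mul_eq_mul_div, ← add_div, eq_div_iff hdet]
        ring
      · simp only [Prod.snd_add, Prod.smul_snd, smul_eq_mul]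
        rw [div_mul_eq_mul_div, div_mul_eq_mul_div, ← add_div, eq_div_iff hdet]
        ring
    rw [hx]
    exact Submodule.add_mem _ (Submodule.smul_mem _ _ hu') (Submodule.smul_mem _ _ hw')
  rw [htop, finrank_top]
  simp

lemma setDim_segment {a b : Pt} (h : a ≠ b) : setDim (segment ℝ a b) = 1 := by
  apply setDim_eq_one (b - a) (sub_ne_zero.2 (Ne.symm h)) (left_mem_segment ℝ a b)
    (right_mem_segment ℝ a b) h
  intro x hx y hy
  obtain ⟨ux, _, _, hx1, hx2⟩ := mem_seg.1 hx
  obtain ⟨uy, _, _, hy1, hy2⟩ := mem_seg.1 hy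
  refine ⟨ux - uy, ?_⟩
  apply Prod.ext
  · simp only [Prod.fst_sub, Prod.smul_fst, smul_eq_mul, Prod.snd_sub]
    rw [hx1, hy1]; ring
  · simp only [Prod.snd_sub, Prod.smul_snd, smul_eq_mul]
    rw [hx2, hy2]; ring

lemma convex_line (a b c : ℝ) : Convex ℝ {p : Pt | a*p.1 + b*p.2 = c} := by
  intro x hx y hy α β hα hβ hαβ
  simp only [mem_setOf_eq] at *
  simp only [Prod.fst_add, Prod.snd_add, Prod.smul_fst, Prod.smul_snd, smul_eq_mul]
  linear_combination α * hx + β * hy + c * hαβ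

lemma convex_halfplane (a b c : ℝ) : Convex ℝ {p : Pt | a*p.1 + b*p.2 ≤ c} := by
  intro x hx y hy α β hα hβ hαβ
  simp only [mem_setOf_eq] at *
  simp only [Prod.fst_add, Prod.snd_add, Prod.smul_fst, Prod.smul_snd, smul_eq_mul]
  have hc : α*c + β*c = c := by rw [← add_mul, hαβ, one_mul]
  nlinarith [mul_le_mul_of_nonneg_left hx hα, mul_le_mul_of_nonneg_left hy hβ]

lemma face_level {Δ : Set Pt} (hΔ : Convex ℝ Δ) (a b c : ℝ)
    (hle : ∀ p ∈ Δ, a*p.1 + b*p.2 ≤ c)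
    (hne : (Δ ∩ {p : Pt | a*p.1 + b*p.2 = c}).Nonempty) :
    IsFaceOf (Δ ∩ {p : Pt | a*p.1 + b*p.2 = c}) Δ := by
  refine ⟨hne, hΔ.inter (convex_line a b c), inter_subset_left, ?_⟩
  rintro x hx y hy z ⟨hzΔ, hzL⟩ ⟨α, β, hα, hβ, hαβ, hz⟩
  simp only [mem_setOf_eq] at hzL
  have hxle := hle x hx
  have hyle := hle y hy
  have hcombo : α * (a*x.1 + b*x.2) + β * (a*y.1 + b*y.2) = c := by
    rw [← hz] at hzL
    simp only [Prod.fst_add, Prod.snd_add, Prod.smul_fst, Prod.smul_snd, smul_eq_mul] at hzL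
    linarith [hzL]
  have hc : α*c + β*c = c := by rw [← add_mul, hαβ, one_mul]
  have hxc : a*x.1 + b*x.2 = c := by nlinarith [mul_le_mul_of_nonneg_left hxle hα.le, mul_le_mul_of_nonneg_left hyle hβ.le]
  have hyc : a*y.1 + b*y.2 = c := by nlinarith [mul_le_mul_of_nonneg_left hxle hα.le, mul_le_mul_of_nonneg_left hyle hβ.le]
  exact ⟨hx, hxc⟩

lemma combo3_mem {S : Set Pt} (hS : Convex ℝ S) {A B C : Pt} (hA : A ∈ S) (hB : B ∈ S) (hC : C ∈ S)
    {α β γ : ℝ} (hα : 0 ≤ α) (hβ : 0 ≤ β) (hγ : 0 ≤ γ) (h : α + β + γ = 1) :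
    α • A + β • B + γ • C ∈ S := by
  rcases eq_or_lt_of_le (add_nonneg hβ hγ) with h0 | h0
  · have hβ0 : β = 0 := by linarith
    have hγ0 : γ = 0 := by linarith
    have hα1 : α = 1 := by linarith
    simp [hβ0, hγ0, hα1, hA]
  · have hm : (β/(β+γ)) • B + (γ/(β+γ)) • C ∈ S := by
      apply hS hB hC (by positivity) (by positivity)
      field_simp
    have hmem := hS hA hm hα (le_of_lt h0) (by linarith)
    have h1 : (β+γ)*(β/(β+γ)) = β := by field_simp
    have h2 : (β+γ)*(γ/(β+γ)) = γ := by field_simp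
    rw [smul_add, smul_smul, smul_smul, h1, h2, ← add_assoc] at hmem
    exact hmem
lemma le_of_sq_le_sq {a b : ℝ} (ha : 0 ≤ a) (hb : 0 ≤ b) (h : a^2 ≤ b^2) : a ≤ b := by
  calc a = Real.sqrt (a^2) := (Real.sqrt_sq ha).symm
    _ ≤ Real.sqrt (b^2) := Real.sqrt_le_sqrt h
    _ = b := Real.sqrt_sq hb

lemma key_ineq {c E c' E' : ℝ} (hE : 0 ≤ E) (hE' : 0 ≤ E')
    (h0 : 0 < c^2 + E^2) (h0' : 0 < c'^2 + E'^2)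
    (h : c / Real.sqrt (c^2+E^2) ≤ c' / Real.sqrt (c'^2+E'^2)) :
    E' * c ≤ E * c' := by
  set r := Real.sqrt (c^2+E^2) with hrdef
  set r' := Real.sqrt (c'^2+E'^2) with hrdef'
  have hr : 0 < r := Real.sqrt_pos.2 h0
  have hr' : 0 < r' := Real.sqrt_pos.2 h0'
  have hr2 : r^2 = c^2 + E^2 := Real.sq_sqrt h0.le
  have hr2' : r'^2 = c'^2 + E'^2 := Real.sq_sqrt h0'.le
  have hcr : c * r' ≤ c' * r := by
    rw [div_le_div_iff₀ hr hr'] at h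
    linarith
  rcases le_or_gt c 0 with hc | hc
  · rcases le_or_gt 0 c' with hc' | hc'
    · nlinarith
    · -- c' < 0, c ≤ 0 : from squares: c'^2 * E^2 ≤ c^2 * E'^2
      have h1 : (-c')*r ≤ (-c)*r' := by nlinarith
      have hsq : ((-c')*r)^2 ≤ ((-c)*r')^2 := by
        nlinarith [mul_le_mul h1 h1 (mul_pos (neg_pos.2 hc') hr).le (mul_nonneg (by linarith) hr'.le)]
      rw [mul_pow, mul_pow, hr2, hr2'] at hsq
      have hsq2 : (E*(-c'))^2 ≤ (E'*(-c))^2 := by nlinarith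
      have := le_of_sq_le_sq (mul_nonneg hE (by linarith)) (mul_nonneg hE' (by linarith)) hsq2
      nlinarith
  · have hc' : 0 < c' := by nlinarith
    have hsq : (c*r')^2 ≤ (c'*r)^2 := by nlinarith [mul_le_mul hcr hcr (mul_pos hc hr').le (mul_pos hc' hr).le]
    rw [mul_pow, mul_pow, hr2, hr2'] at hsq
    have hsq2 : (c*E')^2 ≤ (c'*E)^2 := by nlinarith
    have := le_of_sq_le_sq (mul_nonneg hc.le hE') (mul_nonneg hc'.le hE) hsq2
    nlinarith

/-- The "angle key" of a direction. -/
def keyf (u : Pt) : ℝ := (2*u.1 - u.2) / Real.sqrt ((2*u.1 - u.2)^2 + (u.1 + 2*u.2)^2)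

lemma cross_of_key {u u' : Pt} (hu : u ≠ 0) (hu' : u' ≠ 0)
    (he : u.1 + 2*u.2 ≤ 0) (he' : u'.1 + 2*u'.2 ≤ 0)
    (hk : keyf u ≤ keyf u') : 0 ≤ u.1*u'.2 - u.2*u'.1 := by
  have hne : u.1 ≠ 0 ∨ u.2 ≠ 0 := by
    by_contra hcon
    push_neg at hcon
    exact hu (Prod.ext hcon.1 hcon.2)
  have hne' : u'.1 ≠ 0 ∨ u'.2 ≠ 0 := by
    by_contra hcon
    push_neg at hcon
    exact hu' (Prod.ext hcon.1 hcon.2)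
  have h0 : 0 < (2*u.1 - u.2)^2 + (-(u.1 + 2*u.2))^2 := by
    have h1 : 0 < u.1^2 + u.2^2 := by
      rcases hne with h | h
      · rcases h.lt_or_gt with h2|h2 <;> nlinarith [sq_nonneg u.2]
      · rcases h.lt_or_gt with h2|h2 <;> nlinarith [sq_nonneg u.1]
    nlinarith
  have h0' : 0 < (2*u'.1 - u'.2)^2 + (-(u'.1 + 2*u'.2))^2 := by
    have h1 : 0 < u'.1^2 + u'.2^2 := by
      rcases hne' with h | h
      · rcases h.lt_or_gt with h2|h2 <;> nlinarith [sq_nonneg u'.2]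
      · rcases h.lt_or_gt with h2|h2 <;> nlinarith [sq_nonneg u'.1]
    nlinarith
  have hkey := key_ineq (c := 2*u.1 - u.2) (E := -(u.1 + 2*u.2)) (c' := 2*u'.1 - u'.2)
    (E' := -(u'.1 + 2*u'.2)) (by linarith) (by linarith) h0 h0' ?_
  · nlinarith [hkey]
  · have e1 : (2*u.1 - u.2)^2 + (-(u.1 + 2*u.2))^2 = (2*u.1 - u.2)^2 + (u.1 + 2*u.2)^2 := by ring
    have e2 : (2*u'.1 - u'.2)^2 + (-(u'.1 + 2*u'.2))^2 = (2*u'.1 - u'.2)^2 + (u'.1 + 2*u'.2)^2 := by ring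
    rw [e1, e2]
    exact hk
end XA

namespace XA
variable {s t : ℝ}

lemma part1 (hs : 0 < s) (hst : s < t) (hts : t < 2 * s) :
    IsConeWithVertex {p : Pt | 0 ≤ p.2 ∧ p.1 + 2 * p.2 ≤ s + t} ((s + t, 0) : Pt) := by
  refine ⟨?_, ?_, ?_, ?_⟩
  · have hsplit : {p : Pt | 0 ≤ p.2 ∧ p.1 + 2 * p.2 ≤ s + t}
        = {p : Pt | 0 ≤ p.2} ∩ {p : Pt | p.1 + 2 * p.2 ≤ s + t} := rfl
    rw [hsplit]
    exact IsClosed.inter (isClosed_le continuous_const continuous_snd)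
      (isClosed_le (Continuous.add continuous_fst (continuous_const.mul continuous_snd))
        continuous_const)
  · intro x hx y hy a b ha hb hab
    obtain ⟨hx1, hx2⟩ := hx
    obtain ⟨hy1, hy2⟩ := hy
    have hc : a*(s+t) + b*(s+t) = s+t := by rw [← add_mul, hab, one_mul]
    constructor
    · show 0 ≤ (a • x + b • y).2
      simp only [Prod.snd_add, Prod.smul_snd, smul_eq_mul]
      nlinarith [mul_nonneg ha hx1, mul_nonneg hb hy1]
    · show (a • x + b • y).1 + 2*(a • x + b • y).2 ≤ s + t
      simp only [Prod.fst_add, Prod.snd_add, Prod.smul_fst, Prod.smul_snd, smul_eq_mul]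
      nlinarith [mul_le_mul_of_nonneg_left hx2 ha, mul_le_mul_of_nonneg_left hy2 hb]
  · constructor
    · norm_num
    · show (s+t) + 2*(0:ℝ) ≤ s + t
      norm_num
  · rintro x ⟨hx1, hx2⟩ a ha
    constructor
    · show 0 ≤ ((s+t, (0:ℝ)) + a • (x - (s+t, (0:ℝ)))).2
      simp only [Prod.snd_add, Prod.snd_sub, Prod.smul_snd, smul_eq_mul]
      nlinarith [mul_nonneg ha hx1]
    · show ((s+t, (0:ℝ)) + a • (x - (s+t, (0:ℝ)))).1 + 2*((s+t, (0:ℝ)) + a • (x - (s+t, (0:ℝ)))).2 ≤ s + t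
      simp only [Prod.fst_add, Prod.snd_add, Prod.fst_sub, Prod.snd_sub, Prod.smul_fst, Prod.smul_snd, smul_eq_mul]
      nlinarith [mul_nonpos_of_nonneg_of_nonpos ha (by linarith : x.1 + 2*x.2 - (s+t) ≤ 0)]

lemma part2 (hs : 0 < s) (hst : s < t) (hts : t < 2 * s) :
    ContainsNoLine {p : Pt | 0 ≤ p.2 ∧ p.1 + 2 * p.2 ≤ s + t} := by
  rintro ⟨p, d, hd, hline⟩
  have h2 : d.2 = 0 := by
    by_contra h
    have hm := (hline ((-1 - p.2)/d.2)).1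
    simp only [Prod.snd_add, Prod.smul_snd, smul_eq_mul] at hm
    rw [div_mul_cancel₀ _ h] at hm
    linarith
  have h1 : d.1 = 0 := by
    by_contra h
    have hne : d.1 + 2*d.2 ≠ 0 := by rw [h2]; simpa using h
    have hm := (hline ((1 + (s+t) - (p.1 + 2*p.2))/(d.1 + 2*d.2))).2
    simp only [Prod.fst_add, Prod.snd_add, Prod.smul_fst, Prod.smul_snd, smul_eq_mul] at hm
    have hr : ((1 + (s+t) - (p.1 + 2*p.2))/(d.1 + 2*d.2)) * (d.1 + 2*d.2)
        = 1 + (s+t) - (p.1 + 2*p.2) := div_mul_cancel₀ _ hne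
    nlinarith [hm, hr]
  exact hd (Prod.ext h1 h2)

end XA

namespace XA
variable {s t : ℝ}

lemma setDim_hex (hs : 0 < s) (hst : s < t) :
    setDim (convexHull ℝ {((0, 0) : Pt), ((s + t, 0) : Pt), ((s, s) : Pt),
      ((t - s, s) : Pt), ((0, t) : Pt), ((s, t) : Pt)}) = 2 := by
  have hAh : ((0,0) : Pt) ∈ convexHull ℝ {((0, 0) : Pt), ((s + t, 0) : Pt), ((s, s) : Pt),
      ((t - s, s) : Pt), ((0, t) : Pt), ((s, t) : Pt)} := subset_convexHull ℝ _ (by simp)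
  have hBh : ((s+t,0) : Pt) ∈ convexHull ℝ {((0, 0) : Pt), ((s + t, 0) : Pt), ((s, s) : Pt),
      ((t - s, s) : Pt), ((0, t) : Pt), ((s, t) : Pt)} := subset_convexHull ℝ _ (by simp)
  have hEh : ((0,t) : Pt) ∈ convexHull ℝ {((0, 0) : Pt), ((s + t, 0) : Pt), ((s, s) : Pt),
      ((t - s, s) : Pt), ((0, t) : Pt), ((s, t) : Pt)} := subset_convexHull ℝ _ (by simp)
  refine setDim_eq_two (p := ((0,0) : Pt)) (u := ((s+t, 0) : Pt)) (w := ((0, t) : Pt)) hAh ?_ ?_ ?_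
  · have h : ((0,0) : Pt) + ((s+t, 0) : Pt) = ((s+t, 0) : Pt) := by
      apply Prod.ext
      · show (0:ℝ) + (s+t) = s+t
        ring
      · show (0:ℝ) + 0 = 0
        ring
    rw [h]; exact hBh
  · have h : ((0,0) : Pt) + ((0, t) : Pt) = ((0, t) : Pt) := by
      apply Prod.ext
      · show (0:ℝ) + 0 = 0
        ring
      · show (0:ℝ) + t = t
        ring
    rw [h]; exact hEh
  · show (s+t) * t - 0 * 0 ≠ 0
    intro hcon
    nlinarith


end XA

namespace XA
variable {s t : ℝ}

set_option maxHeartbeats 1000000 in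
lemma part3 (hs : 0 < s) (hst : s < t) (hts : t < 2 * s) :
    ConeCompat (XrayST s t) {p : Pt | 0 ≤ p.2 ∧ p.1 + 2 * p.2 ≤ s + t} ((s + t, 0) : Pt) := by
  classical
  have hvC : ((s+t, 0) : Pt) ∈ {p : Pt | 0 ≤ p.2 ∧ p.1 + 2 * p.2 ≤ s + t} := by
    constructor
    · norm_num
    · show (s+t) + 2*(0:ℝ) ≤ s + t
      norm_num
  have hA : ((0,0) : Pt) ∈ ({((0, 0) : Pt), ((s + t, 0) : Pt), ((s, s) : Pt),
      ((t - s, s) : Pt), ((0, t) : Pt), ((s, t) : Pt)} : Set Pt) := by simp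
  have hB : ((s+t,0) : Pt) ∈ ({((0, 0) : Pt), ((s + t, 0) : Pt), ((s, s) : Pt),
      ((t - s, s) : Pt), ((0, t) : Pt), ((s, t) : Pt)} : Set Pt) := by simp
  have hD : ((t-s,s) : Pt) ∈ ({((0, 0) : Pt), ((s + t, 0) : Pt), ((s, s) : Pt),
      ((t - s, s) : Pt), ((0, t) : Pt), ((s, t) : Pt)} : Set Pt) := by simp
  have hF : ((s,t) : Pt) ∈ ({((0, 0) : Pt), ((s + t, 0) : Pt), ((s, s) : Pt),
      ((t - s, s) : Pt), ((0, t) : Pt), ((s, t) : Pt)} : Set Pt) := by simp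
  have hAh := subset_convexHull ℝ _ hA
  have hBh := subset_convexHull ℝ _ hB
  have hDh := subset_convexHull ℝ _ hD
  have hFh := subset_convexHull ℝ _ hF
  have hseg1hex : segment ℝ ((0,0) : Pt) ((s+t, 0) : Pt) ⊆ convexHull ℝ {((0, 0) : Pt),
      ((s + t, 0) : Pt), ((s, s) : Pt), ((t - s, s) : Pt), ((0, t) : Pt), ((s, t) : Pt)} :=
    (convex_convexHull ℝ _).segment_subset hAh hBh
  have hseg2hex : segment ℝ ((t-s, s) : Pt) ((s+t, 0) : Pt) ⊆ convexHull ℝ {((0, 0) : Pt),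
      ((s + t, 0) : Pt), ((s, s) : Pt), ((t - s, s) : Pt), ((0, t) : Pt), ((s, t) : Pt)} :=
    (convex_convexHull ℝ _).segment_subset hDh hBh
  have hvseg1 : ((s+t,0) : Pt) ∈ segment ℝ ((0,0) : Pt) ((s+t, 0) : Pt) := right_mem_segment ℝ _ _
  have hvseg2 : ((s+t,0) : Pt) ∈ segment ℝ ((t-s,s) : Pt) ((s+t, 0) : Pt) := right_mem_segment ℝ _ _
  refine ⟨Metric.ball ((s+t, 0) : Pt) s, Metric.ball_mem_nhds _ hs,
    fun σ => if σ ⊆ {((s+t, 0) : Pt)} then {((s+t, 0) : Pt)}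
      else if σ ⊆ {p : Pt | p.2 = 0} then segment ℝ ((0,0) : Pt) ((s+t, 0) : Pt)
      else if σ ⊆ {p : Pt | p.1 + 2*p.2 = s+t} then segment ℝ ((t-s, s) : Pt) ((s+t, 0) : Pt)
      else convexHull ℝ {((0, 0) : Pt), ((s + t, 0) : Pt), ((s, s) : Pt),
        ((t - s, s) : Pt), ((0, t) : Pt), ((s, t) : Pt)}, ?_, ?_⟩
  · -- each face gets a good element
    rintro σ ⟨hne, hconv, hext⟩
    beta_reduce
    have hball : ∀ q : Pt, q ∈ Metric.ball ((s+t, 0) : Pt) s → |q.1 - (s+t)| < s ∧ |q.2| < s := by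
      intro q hq
      rw [Metric.mem_ball, Prod.dist_eq, max_lt_iff, Real.dist_eq, Real.dist_eq] at hq
      simpa using hq
    by_cases h1 : σ ⊆ {((s+t, 0) : Pt)}
    · have hσ : σ = {((s+t, 0) : Pt)} := by
        rcases subset_singleton_iff_eq.1 h1 with h | h
        · exact absurd h hne.ne_empty
        · exact h
      rw [if_pos h1]
      exact ⟨by simp [XrayST], by rw [hσ], fun q hq => h1 hq.1⟩
    · rw [if_neg h1]
      obtain ⟨p, hp, hpv⟩ : ∃ p ∈ σ, p ≠ ((s+t, 0) : Pt) := by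
        by_contra hcon
        push_neg at hcon
        exact h1 fun q hq => hcon q hq
      have hpC := hext.1 hp
      obtain ⟨hpy, hpf⟩ := hpC
      by_cases h2 : σ ⊆ {p : Pt | p.2 = 0}
      · -- bottom edge
        rw [if_pos h2]
        have hp2 : p.2 = 0 := h2 hp
        have hp1 : p.1 ≠ s + t := by
          intro h
          exact hpv (Prod.ext h hp2)
        have hyC : ((2*p.1 - (s+t), 0) : Pt) ∈ {p : Pt | 0 ≤ p.2 ∧ p.1 + 2 * p.2 ≤ s + t} := by
          constructor
          · norm_num
          · show 2*p.1 - (s+t) + 2*(0:ℝ) ≤ s + t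
            rw [hp2] at hpf
            linarith
        have hvσ : ((s+t, 0) : Pt) ∈ σ := by
          refine hext.2 hvC hyC hp ⟨1/2, 1/2, by norm_num, by norm_num, by norm_num, ?_⟩
          apply Prod.ext
          · show (1/2)*(s+t) + (1/2)*(2*p.1 - (s+t)) = p.1
            ring
          · show (1/2)*(0:ℝ) + (1/2)*(0:ℝ) = p.2
            rw [hp2]; ring
        have hdim : setDim σ = 1 := by
          refine setDim_eq_one ((1,0) : Pt) ?_ hvσ hp (fun h => hpv h.symm) ?_
          · intro h
            rw [Prod.ext_iff] at h
            exact one_ne_zero h.1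
          · intro x hx y hy
            refine ⟨x.1 - y.1, Prod.ext ?_ ?_⟩
            · show x.1 - y.1 = (x.1 - y.1) * 1
              ring
            · show x.2 - y.2 = (x.1 - y.1) * 0
              rw [h2 hx, h2 hy]; ring
        refine ⟨by simp [XrayST], ?_, ?_⟩
        · rw [hdim]
          apply setDim_segment
          intro h
          rw [Prod.ext_iff] at h
          exact absurd h.1.symm (by norm_num; linarith)
        · rintro q ⟨hqσ, hqU⟩
          obtain ⟨hb1, _⟩ := hball q hqU
          have hq2 : q.2 = 0 := h2 hqσ
          have hqf := (hext.1 hqσ).2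
          rw [hq2] at hqf
          rw [abs_lt] at hb1
          rw [mem_seg]
          refine ⟨q.1/(s+t), div_nonneg (by linarith) (by linarith), (div_le_one (by linarith)).2 (by linarith), ?_, ?_⟩
          · show q.1 = (1 - q.1/(s+t))*0 + q.1/(s+t)*(s+t)
            rw [div_mul_cancel₀ _ (by linarith : s+t ≠ 0)]
            ring
          · show q.2 = (1 - q.1/(s+t))*0 + q.1/(s+t)*0
            rw [hq2]; ring
      · by_cases h3 : σ ⊆ {p : Pt | p.1 + 2*p.2 = s+t}
        · -- slanted edge
          rw [if_neg h2, if_pos h3]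
          have hpf' : p.1 + 2*p.2 = s + t := h3 hp
          have hp2 : p.2 ≠ 0 := by
            intro h
            rw [h] at hpf'
            apply hpv
            apply Prod.ext
            · show p.1 = s + t
              linarith
            · exact h
          have hp2' : 0 < p.2 := lt_of_le_of_ne hpy (Ne.symm hp2)
          have hyC : ((2*p.1 - (s+t), 2*p.2) : Pt) ∈ {p : Pt | 0 ≤ p.2 ∧ p.1 + 2 * p.2 ≤ s + t} := by
            constructor
            · show (0:ℝ) ≤ 2*p.2
              linarith
            · show 2*p.1 - (s+t) + 2*(2*p.2) ≤ s + t
              linarith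
          have hvσ : ((s+t, 0) : Pt) ∈ σ := by
            refine hext.2 hvC hyC hp ⟨1/2, 1/2, by norm_num, by norm_num, by norm_num, ?_⟩
            apply Prod.ext
            · show (1/2)*(s+t) + (1/2)*(2*p.1 - (s+t)) = p.1
              ring
            · show (1/2)*(0:ℝ) + (1/2)*(2*p.2) = p.2
              ring
          have hdim : setDim σ = 1 := by
            refine setDim_eq_one ((-2,1) : Pt) ?_ hvσ hp (fun h => hpv h.symm) ?_
            · intro h
              rw [Prod.ext_iff] at h
              exact one_ne_zero h.2
            · intro x hx y hy
              have hxf : x.1 + 2*x.2 = s+t := h3 hx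
              have hyf : y.1 + 2*y.2 = s+t := h3 hy
              refine ⟨x.2 - y.2, Prod.ext ?_ ?_⟩
              · show x.1 - y.1 = (x.2 - y.2) * (-2)
                linarith
              · show x.2 - y.2 = (x.2 - y.2) * 1
                ring
          refine ⟨by simp [XrayST], ?_, ?_⟩
          · rw [hdim]
            apply setDim_segment
            intro h
            rw [Prod.ext_iff] at h
            exact absurd h.2 (by norm_num; linarith)
          · rintro q ⟨hqσ, hqU⟩
            obtain ⟨_, hb2⟩ := hball q hqU
            have hqf : q.1 + 2*q.2 = s+t := h3 hqσ
            have hqy : 0 ≤ q.2 := (hext.1 hqσ).1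
            rw [abs_lt] at hb2
            rw [mem_seg]
            refine ⟨1 - q.2/s, by
                have : q.2/s ≤ 1 := (div_le_one hs).2 (by linarith)
                linarith, by
                have : 0 ≤ q.2/s := div_nonneg hqy hs.le
                linarith, ?_, ?_⟩
            · show q.1 = (1 - (1 - q.2/s))*(t-s) + (1 - q.2/s)*(s+t)
              field_simp
              ring_nf
              nlinarith [hqf]
            · show q.2 = (1 - (1 - q.2/s))*s + (1 - q.2/s)*0
              field_simp
              ring
        · -- two-dimensional face
          rw [if_neg h2, if_neg h3]
          obtain ⟨pa, hpa, hpa2⟩ : ∃ x ∈ σ, x.2 ≠ 0 := by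
            by_contra hcon
            push_neg at hcon
            exact h2 fun q hq => hcon q hq
          obtain ⟨pb, hpb, hpbf⟩ : ∃ x ∈ σ, x.1 + 2*x.2 ≠ s+t := by
            by_contra hcon
            push_neg at hcon
            exact h3 fun q hq => hcon q hq
          have hpa2' : 0 < pa.2 := lt_of_le_of_ne (hext.1 hpa).1 (Ne.symm hpa2)
          have hpbf' : pb.1 + 2*pb.2 < s + t := lt_of_le_of_ne (hext.1 hpb).2 hpbf
          set m : Pt := (1/2 : ℝ) • pa + (1/2 : ℝ) • pb with hmdef
          have hm : m ∈ σ := hconv hpa hpb (by norm_num) (by norm_num) (by norm_num)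
          have hm1 : m.1 = (1/2)*pa.1 + (1/2)*pb.1 := by
            rw [hmdef]; simp [Prod.fst_add, Prod.smul_fst]
          have hm2 : m.2 = (1/2)*pa.2 + (1/2)*pb.2 := by
            rw [hmdef]; simp [Prod.snd_add, Prod.smul_snd]
          have hmy : 0 < m.2 := by
            rw [hm2]
            nlinarith [(hext.1 hpb).1]
          have hmf : m.1 + 2*m.2 < s + t := by
            rw [hm1, hm2]
            nlinarith [(hext.1 hpa).2]
          set δ : ℝ := s + t - (m.1 + 2*m.2) with hδdef
          have hδ : 0 < δ := by rw [hδdef]; linarith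
          set δ' : ℝ := min m.2 (δ/2) with hδ'def
          have hδ' : 0 < δ' := lt_min hmy (by linarith)
          have hδ'm : δ' ≤ m.2 := min_le_left _ _
          have hδ'δ : δ' ≤ δ/2 := min_le_right _ _
          have hmC := hext.1 hm
          -- horizontal perturbations
          have hx1C : ((m.1 + δ, m.2) : Pt) ∈ {p : Pt | 0 ≤ p.2 ∧ p.1 + 2 * p.2 ≤ s + t} := by
            constructor
            · exact hmC.1
            · show m.1 + δ + 2*m.2 ≤ s + t
              rw [hδdef]; linarith
          have hx2C : ((m.1 - δ, m.2) : Pt) ∈ {p : Pt | 0 ≤ p.2 ∧ p.1 + 2 * p.2 ≤ s + t} := by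
            constructor
            · exact hmC.1
            · show m.1 - δ + 2*m.2 ≤ s + t
              linarith
          have hy1C : ((m.1, m.2 + δ') : Pt) ∈ {p : Pt | 0 ≤ p.2 ∧ p.1 + 2 * p.2 ≤ s + t} := by
            constructor
            · show (0:ℝ) ≤ m.2 + δ'
              linarith [hmC.1]
            · show m.1 + 2*(m.2 + δ') ≤ s + t
              linarith
          have hy2C : ((m.1, m.2 - δ') : Pt) ∈ {p : Pt | 0 ≤ p.2 ∧ p.1 + 2 * p.2 ≤ s + t} := by
            constructor
            · show (0:ℝ) ≤ m.2 - δ'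
              linarith
            · show m.1 + 2*(m.2 - δ') ≤ s + t
              linarith
          have hxs := hext.2 hx1C hx2C hm ⟨1/2, 1/2, by norm_num, by norm_num, by norm_num, by
            apply Prod.ext
            · show (1/2)*(m.1+δ) + (1/2)*(m.1-δ) = m.1
              ring
            · show (1/2)*m.2 + (1/2)*m.2 = m.2
              ring⟩
          have hys := hext.2 hy1C hy2C hm ⟨1/2, 1/2, by norm_num, by norm_num, by norm_num, by
            apply Prod.ext
            · show (1/2)*m.1 + (1/2)*m.1 = m.1
              ring
            · show (1/2)*(m.2+δ') + (1/2)*(m.2-δ') = m.2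
              ring⟩
          have hmu : m + ((δ, 0) : Pt) ∈ σ := by
            have : m + ((δ, 0) : Pt) = ((m.1 + δ, m.2) : Pt) := by
              apply Prod.ext <;> simp
            rw [this]
            exact hxs
          have hmw : m + ((0, δ') : Pt) ∈ σ := by
            have : m + ((0, δ') : Pt) = ((m.1, m.2 + δ') : Pt) := by
              apply Prod.ext <;> simp
            rw [this]
            exact hys
          have hdimσ : setDim σ = 2 := by
            refine setDim_eq_two hm hmu hmw ?_
            show δ * δ' - 0 * 0 ≠ 0
            have hpos : 0 < δ * δ' := mul_pos hδ hδ'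
            intro hcon
            nlinarith
          refine ⟨by simp [XrayST], by rw [hdimσ, setDim_hex hs hst], ?_⟩
          rintro q ⟨hqσ, hqU⟩
          obtain ⟨hb1, hb2⟩ := hball q hqU
          rw [abs_lt] at hb1 hb2
          obtain ⟨hqy, hqf⟩ := hext.1 hqσ
          have ht0 : t ≠ 0 := by linarith
          have hst0 : s + t ≠ 0 := by linarith
          have hq : q = ((s+t-q.1-q.2)/(s+t)) • ((0,0) : Pt) + ((t*q.1 - s*q.2)/(t*(s+t))) • ((s+t, 0) : Pt)
              + (q.2/t) • ((s, t) : Pt) := by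
            apply Prod.ext
            · show q.1 = ((s+t-q.1-q.2)/(s+t))*0 + ((t*q.1 - s*q.2)/(t*(s+t)))*(s+t) + (q.2/t)*s
              field_simp
              ring
            · show q.2 = ((s+t-q.1-q.2)/(s+t))*0 + ((t*q.1 - s*q.2)/(t*(s+t)))*0 + (q.2/t)*t
              field_simp
              ring
          rw [hq]
          refine combo3_mem (convex_convexHull ℝ _) hAh hBh hFh ?_ ?_ ?_ ?_
          · apply div_nonneg _ (by linarith : (0:ℝ) ≤ s + t)
            linarith
          · apply div_nonneg _ (by nlinarith : (0:ℝ) ≤ t*(s+t))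
            nlinarith
          · exact div_nonneg hqy (by linarith)
          · field_simp
            ring
  · -- monotonicity
    rintro σ σ' hσ hσ' hsub
    beta_reduce
    by_cases h1' : σ' ⊆ {((s+t, 0) : Pt)}
    · rw [if_pos (hsub.trans h1'), if_pos h1']
    · rw [if_neg h1']
      by_cases h1 : σ ⊆ {((s+t, 0) : Pt)}
      · rw [if_pos h1]
        by_cases h2' : σ' ⊆ {p : Pt | p.2 = 0}
        · rw [if_pos h2']
          exact singleton_subset_iff.2 hvseg1
        · rw [if_neg h2']
          by_cases h3' : σ' ⊆ {p : Pt | p.1 + 2*p.2 = s+t}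
          · rw [if_pos h3']
            exact singleton_subset_iff.2 hvseg2
          · rw [if_neg h3']
            exact singleton_subset_iff.2 hBh
      · rw [if_neg h1]
        by_cases h2 : σ ⊆ {p : Pt | p.2 = 0}
        · rw [if_pos h2]
          by_cases h2' : σ' ⊆ {p : Pt | p.2 = 0}
          · rw [if_pos h2']
          · rw [if_neg h2']
            have h3' : ¬ σ' ⊆ {p : Pt | p.1 + 2*p.2 = s+t} := by
              intro hcon
              apply h1
              intro q hq
              have hq1 : q.2 = 0 := h2 hq
              have hq2 : q.1 + 2*q.2 = s+t := hcon (hsub hq)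
              have hqv : q = ((s+t, 0) : Pt) := by
                apply Prod.ext
                · show q.1 = s + t
                  linarith
                · exact hq1
              simp [hqv]
            rw [if_neg h3']
            exact hseg1hex
        · rw [if_neg h2]
          rw [if_neg (fun hcon => h2 (hsub.trans hcon))]
          by_cases h3 : σ ⊆ {p : Pt | p.1 + 2*p.2 = s+t}
          · rw [if_pos h3]
            by_cases h3' : σ' ⊆ {p : Pt | p.1 + 2*p.2 = s+t}
            · rw [if_pos h3']
            · rw [if_neg h3']
              exact hseg2hex
          · rw [if_neg h3, if_neg (fun hcon => h3 (hsub.trans hcon))]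
end XA

namespace XA
variable {s t : ℝ}

set_option maxHeartbeats 2000000 in
lemma part4 (hs : 0 < s) (hst : s < t) (hts : t < 2 * s) :
    ∀ Δ : Set Pt, IsPolytope Δ →
      IsExtensionOf Δ {p : Pt | 0 ≤ p.2 ∧ p.1 + 2 * p.2 ≤ s + t} ((s + t, 0) : Pt) →
      ¬ PolyCompat (XrayST s t) Δ := by
  rintro Δ ⟨F, hFne, hΔdef⟩ ⟨U, hU, hCU⟩ ⟨X, hX1, hX2⟩
  obtain ⟨ε, hε, hball⟩ := Metric.mem_nhds_iff.1 hU
  have hconvΔ : Convex ℝ Δ := hΔdef ▸ convex_convexHull ℝ _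
  have hdist : ∀ q : Pt, dist q ((s+t, 0) : Pt) = max |q.1 - (s+t)| |q.2| := by
    intro q
    rw [Prod.dist_eq, Real.dist_eq, Real.dist_eq]
    norm_num
  have hCtoΔ : ∀ q : Pt, 0 ≤ q.2 → q.1 + 2*q.2 ≤ s+t → dist q ((s+t, 0) : Pt) < ε → q ∈ Δ := by
    intro q h1 h2 h3
    exact ((Set.ext_iff.1 hCU q).1 ⟨⟨h1, h2⟩, hball (Metric.mem_ball.2 h3)⟩).1
  have hvΔ : ((s+t, 0) : Pt) ∈ Δ := by
    refine hCtoΔ _ le_rfl (by norm_num) ?_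
    simp [dist_self, hε]
  -- Δ is contained in the cone C
  have hΔC : ∀ q ∈ Δ, 0 ≤ q.2 ∧ q.1 + 2*q.2 ≤ s+t := by
    intro q hq
    set d := dist q ((s+t, 0) : Pt) with hd
    have hd0 : 0 ≤ d := dist_nonneg
    set c := min 1 (ε/(2*(d+1))) with hc
    have hc0 : 0 < c := lt_min one_pos (by positivity)
    have hc1 : c ≤ 1 := min_le_left _ _
    have hcd : c ≤ ε/(2*(d+1)) := min_le_right _ _
    have hz : (1-c) • ((s+t, 0) : Pt) + c • q ∈ Δ :=
      hconvΔ hvΔ hq (by linarith) hc0.le (by ring)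
    have hzd : dist ((1-c) • ((s+t, 0) : Pt) + c • q) ((s+t, 0) : Pt) < ε := by
      have h1 : (1-c) • ((s+t, 0) : Pt) + c • q - ((s+t, 0) : Pt) = c • (q - ((s+t, 0) : Pt)) := by
        apply Prod.ext
        · show (1-c)*(s+t) + c*q.1 - (s+t) = c*(q.1 - (s+t))
          ring
        · show (1-c)*0 + c*q.2 - 0 = c*(q.2 - 0)
          ring
      rw [dist_eq_norm, h1, norm_smul, Real.norm_eq_abs, abs_of_pos hc0, ← dist_eq_norm, ← hd]
      calc c * d ≤ (ε/(2*(d+1))) * d := by nlinarith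
        _ < ε := by
          rw [div_mul_eq_mul_div, div_lt_iff₀ (by positivity)]
          nlinarith
    have hzC := ((Set.ext_iff.1 hCU _).2 ⟨hz, hball (Metric.mem_ball.2 hzd)⟩).1
    obtain ⟨hz1, hz2⟩ := hzC
    have e2 : ((1-c) • ((s+t, 0) : Pt) + c • q).2 = c * q.2 := by
      show (1-c)*0 + c*q.2 = c*q.2
      ring
    have e1 : ((1-c) • ((s+t, 0) : Pt) + c • q).1 = (1-c)*(s+t) + c*q.1 := by
      show (1-c)*(s+t) + c*q.1 = (1-c)*(s+t) + c*q.1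
      ring
    rw [e2] at hz1
    rw [e1, e2] at hz2
    constructor
    · by_contra hcon
      push_neg at hcon
      nlinarith [mul_pos hc0 (neg_pos.2 hcon)]
    · by_contra hcon
      push_neg at hcon
      nlinarith [mul_pos hc0 (sub_pos.2 hcon)]
  -- points of the slanted ray near the vertex are in Δ
  have hpμ : ∀ μ : ℝ, 0 < μ → μ ≤ ε/3 → ((s+t-2*μ, μ) : Pt) ∈ Δ := by
    intro μ h1 h2
    refine hCtoΔ _ h1.le (by show s+t-2*μ + 2*μ ≤ s+t; linarith) ?_
    rw [hdist]
    show max |s+t-2*μ - (s+t)| |μ| < ε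
    rw [max_lt_iff]
    constructor
    · rw [abs_lt]; constructor <;> linarith
    · rw [abs_lt]; constructor <;> linarith
  have hbottom : ((s+t-ε/3, 0) : Pt) ∈ Δ := by
    refine hCtoΔ _ le_rfl (by show s+t-ε/3 + 2*0 ≤ s+t; linarith) ?_
    rw [hdist]
    show max |s+t-ε/3 - (s+t)| |(0:ℝ)| < ε
    rw [max_lt_iff]
    constructor
    · rw [abs_lt]; constructor <;> linarith
    · rw [abs_lt]; constructor <;> linarith
  -- the slanted face σ
  set σ : Set Pt := Δ ∩ {p : Pt | 1*p.1 + 2*p.2 = s+t} with hσdef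
  have hvσ : ((s+t, 0) : Pt) ∈ σ := ⟨hvΔ, by show 1*(s+t) + 2*0 = s+t; ring⟩
  have hfaceσ : IsFaceOf σ Δ := by
    refine face_level hconvΔ 1 2 (s+t) ?_ ⟨_, hvσ⟩
    intro p hp
    have := (hΔC p hp).2
    linarith
  have hcompΔ : IsCompact Δ := hΔdef ▸ F.finite_toSet.isCompact_convexHull (𝕜 := ℝ)
  have hcompσ : IsCompact σ := hcompΔ.inter_right
    (isClosed_eq (by fun_prop) continuous_const)
  obtain ⟨w, hwσ, hwmax'⟩ := hcompσ.exists_isMaxOn ⟨_, hvσ⟩ continuous_snd.continuousOn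
  have hwmax : ∀ p ∈ σ, p.2 ≤ w.2 := fun p hp => isMaxOn_iff.1 hwmax' p hp
  have hwΔ : w ∈ Δ := hwσ.1
  have hwf : 1*w.1 + 2*w.2 = s+t := hwσ.2
  have hwy : 0 < w.2 := by
    have hp3 : ((s+t-2*(ε/3), ε/3) : Pt) ∈ σ := ⟨hpμ (ε/3) (by linarith) le_rfl,
      by show 1*(s+t-2*(ε/3)) + 2*(ε/3) = s+t; ring⟩
    have := hwmax _ hp3
    have h3 : ((s+t-2*(ε/3), ε/3) : Pt).2 = ε/3 := rfl
    rw [h3] at this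
    linarith
  -- {w} is a face of Δ
  have hfw : IsFaceOf {w} Δ := by
    refine ⟨singleton_nonempty w, convex_singleton w, IsExtreme.trans hfaceσ.2.2 ?_⟩
    constructor
    · exact singleton_subset_iff.2 hwσ
    · intro x hx y hy z hzw hseg
      rw [mem_singleton_iff] at hzw
      obtain ⟨α, β, hα, hβ, hαβ, hz⟩ := hseg
      rw [hzw] at hz
      have hx2 : x.2 ≤ w.2 := hwmax x hx
      have hy2 : y.2 ≤ w.2 := hwmax y hy
      have hz2 : α*x.2 + β*y.2 = w.2 := by rw [← hz]; rfl
      have hcc : α*w.2 + β*w.2 = w.2 := by rw [← add_mul, hαβ, one_mul]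
      have hx2e : x.2 = w.2 := by
        nlinarith [mul_le_mul_of_nonneg_left hx2 hα.le, mul_le_mul_of_nonneg_left hy2 hβ.le]
      have hy2e : y.2 = w.2 := by
        nlinarith [mul_le_mul_of_nonneg_left hx2 hα.le, mul_le_mul_of_nonneg_left hy2 hβ.le]
      have hxf : 1*x.1 + 2*x.2 = s+t := hx.2
      have hyf : 1*y.1 + 2*y.2 = s+t := hy.2
      rw [mem_singleton_iff]
      apply Prod.ext
      · show x.1 = w.1
        linarith
      · exact hx2e
  -- identify w = (t-s, s) using the compatibility data on the face {w}
  obtain ⟨hXwmem, hXwdim, hXwsub⟩ := hX1 {w} hfw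
  have hwX : w ∈ X {w} := hXwsub rfl
  have hsd : setDim (X {w}) = 0 := by rw [hXwdim, setDim_singleton]
  have hweq : w = ((t-s, s) : Pt) := by
    simp only [XrayST, mem_insert_iff, mem_singleton_iff] at hXwmem
    have hdIC : ∀ a b : Pt, X {w} = segment ℝ a b → a ≠ b → False := by
      intro a b hab hne
      rw [hab, setDim_segment hne] at hsd
      exact one_ne_zero hsd
    rcases hXwmem with h|h|h|h|h|h|h|h|h|h|h|h|h|h|h|h
    · rw [h, mem_singleton_iff] at hwX
      rw [hwX] at hwf
      norm_num at hwf
      linarith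
    · rw [h, mem_singleton_iff] at hwX
      rw [hwX] at hwy
      norm_num at hwy
    · rw [h, mem_singleton_iff] at hwX
      rw [hwX] at hwf
      norm_num at hwf
      linarith
    · rw [h, mem_singleton_iff] at hwX
      exact hwX
    · rw [h, mem_singleton_iff] at hwX
      rw [hwX] at hwf
      norm_num at hwf
      linarith
    · rw [h, mem_singleton_iff] at hwX
      rw [hwX] at hwf
      norm_num at hwf
      linarith
    · exfalso
      exact hdIC _ _ h (by
        intro hcon
        rw [Prod.ext_iff] at hcon
        obtain ⟨h1, h2⟩ := hcon
        norm_num at h1 h2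
        linarith)
    · exfalso
      exact hdIC _ _ h (by
        intro hcon
        rw [Prod.ext_iff] at hcon
        norm_num at hcon
        linarith [hcon])
    · exfalso
      exact hdIC _ _ h (by
        intro hcon
        rw [Prod.ext_iff] at hcon
        norm_num at hcon
        linarith [hcon])
    · exfalso
      exact hdIC _ _ h (by
        intro hcon
        rw [Prod.ext_iff] at hcon
        norm_num at hcon
        linarith [hcon])
    · exfalso
      exact hdIC _ _ h (by
        intro hcon
        rw [Prod.ext_iff] at hcon
        norm_num at hcon
        linarith [hcon])
    · exfalso
      exact hdIC _ _ h (by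
        intro hcon
        rw [Prod.ext_iff] at hcon
        norm_num at hcon
        linarith [hcon])
    · exfalso
      exact hdIC _ _ h (by
        intro hcon
        rw [Prod.ext_iff] at hcon
        norm_num at hcon
        linarith [hcon])
    · exfalso
      exact hdIC _ _ h (by
        intro hcon
        rw [Prod.ext_iff] at hcon
        norm_num at hcon
        linarith [hcon])
    · exfalso
      exact hdIC _ _ h (by
        intro hcon
        rw [Prod.ext_iff] at hcon
        norm_num at hcon
        linarith [hcon])
    · rw [h, setDim_hex hs hst] at hsd
      norm_num at hsd
  -- σ is contained in the slanted segment
  have hσS2 : ∀ q ∈ σ, q.2 ≤ s := by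
    intro q hq
    have := hwmax q hq
    rw [hweq] at this
    exact this
  have hFΔ : (F : Set Pt) ⊆ Δ := hΔdef ▸ subset_convexHull ℝ _
  obtain ⟨q0, hq0F, hq0f⟩ : ∃ q ∈ F, 1*q.1 + 2*q.2 < s+t := by
    by_contra hcon
    push_neg at hcon
    have hFline : (F : Set Pt) ⊆ {p : Pt | 1*p.1 + 2*p.2 = s+t} := by
      intro q hq
      exact le_antisymm (by linarith [(hΔC q (hFΔ hq)).2]) (hcon q hq)
    have hΔline : Δ ⊆ {p : Pt | 1*p.1 + 2*p.2 = s+t} :=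
      hΔdef ▸ convexHull_min hFline (convex_line 1 2 (s+t))
    have hb : 1*(s+t-ε/3) + 2*(0:ℝ) = s+t := hΔline hbottom
    linarith
  set w0 : Pt := ((t-s, s) : Pt) with hw0
  set Fq := F.filter (fun q => 1*q.1 + 2*q.2 < s+t) with hFqdef
  have hFqne : Fq.Nonempty := ⟨q0, Finset.mem_filter.2 ⟨hq0F, hq0f⟩⟩
  obtain ⟨qs, hqsFq, hqsmin⟩ := Finset.exists_min_image Fq (fun q => keyf (q - w0)) hFqne
  have hqsF : qs ∈ F := (Finset.mem_filter.1 hqsFq).1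
  have hqsf : 1*qs.1 + 2*qs.2 < s+t := (Finset.mem_filter.1 hqsFq).2
  have hqsΔ : qs ∈ Δ := hFΔ hqsF
  set u : Pt := qs - w0 with hu
  have hqsw : qs ≠ w0 := by
    intro h
    rw [h] at hqsf
    have h2 : 1*(t-s) + 2*s < s+t := hqsf
    linarith
  have hune : u ≠ 0 := sub_ne_zero.2 hqsw
  have hu1 : u.1 = qs.1 - (t-s) := rfl
  have hu2 : u.2 = qs.2 - s := rfl
  have hue : u.1 + 2*u.2 ≤ 0 := by rw [hu1, hu2]; linarith
  have hcross : ∀ q ∈ F, 0 ≤ u.1*(q.2 - s) - u.2*(q.1 - (t-s)) := by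
    intro q hqF
    rcases lt_or_ge (1*q.1 + 2*q.2) (s+t) with hqf | hqf
    · have hkey := hqsmin q (Finset.mem_filter.2 ⟨hqF, hqf⟩)
      have hqw : q ≠ w0 := by
        intro h
        rw [h] at hqf
        have h2 : 1*(t-s) + 2*s < s+t := hqf
        linarith
      have h1 := cross_of_key hune (sub_ne_zero.2 hqw) hue
        (by show q.1 - (t-s) + 2*(q.2 - s) ≤ 0; linarith) hkey
      have e1 : (q - w0).1 = q.1 - (t-s) := rfl
      have e2 : (q - w0).2 = q.2 - s := rfl
      rw [e1, e2] at h1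
      exact h1
    · have hqΔ : q ∈ Δ := hFΔ hqF
      have hqf' : 1*q.1 + 2*q.2 = s+t := le_antisymm (by linarith [(hΔC q hqΔ).2]) hqf
      have hqs2 : q.2 ≤ s := hσS2 q ⟨hqΔ, hqf'⟩
      have hident : u.1*(q.2 - s) - u.2*(q.1 - (t-s)) = (s - q.2)*(-(u.1 + 2*u.2)) := by
        have hq1 : q.1 - (t-s) = -2*(q.2 - s) := by linarith
        rw [hq1]; ring
      rw [hident]
      exact mul_nonneg (by linarith) (by linarith)
  have hΔhalf : ∀ p ∈ Δ, u.2*p.1 + (-u.1)*p.2 ≤ u.2*(t-s) + (-u.1)*s := by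
    intro p hp
    have hsub : Δ ⊆ {p : Pt | u.2*p.1 + (-u.1)*p.2 ≤ u.2*(t-s) + (-u.1)*s} := by
      rw [hΔdef]
      apply convexHull_min _ (convex_halfplane _ _ _)
      intro q hqF
      show u.2*q.1 + (-u.1)*q.2 ≤ u.2*(t-s) + (-u.1)*s
      nlinarith [hcross q hqF]
    exact hsub hp
  set τ : Set Pt := Δ ∩ {p : Pt | u.2*p.1 + (-u.1)*p.2 = u.2*(t-s) + (-u.1)*s} with hτ
  have hw0Δ : w0 ∈ Δ := by rw [← hweq]; exact hwΔ
  have hw0τ : w0 ∈ τ := ⟨hw0Δ, by show u.2*(t-s) + (-u.1)*s = u.2*(t-s) + (-u.1)*s; rfl⟩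
  have hqsτ : qs ∈ τ := ⟨hqsΔ, by
    show u.2*qs.1 + (-u.1)*qs.2 = u.2*(t-s) + (-u.1)*s
    rw [hu1, hu2]
    ring⟩
  have hfaceτ : IsFaceOf τ Δ := face_level hconvΔ u.2 (-u.1) _ hΔhalf ⟨_, hw0τ⟩
  have hdimτ : setDim τ = 1 := by
    refine setDim_eq_one u hune hw0τ hqsτ (fun h => hqsw h.symm) ?_
    intro x hx y hy
    have hxe : u.2*x.1 + (-u.1)*x.2 = u.2*(t-s) + (-u.1)*s := hx.2
    have hye : u.2*y.1 + (-u.1)*y.2 = u.2*(t-s) + (-u.1)*s := hy.2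
    rcases eq_or_ne u.1 0 with h10 | h10
    · have h20 : u.2 ≠ 0 := by
        intro h20
        exact hune (Prod.ext h10 h20)
      refine ⟨(x.2 - y.2)/u.2, Prod.ext ?_ ?_⟩
      · show x.1 - y.1 = (x.2 - y.2)/u.2 * u.1
        rw [h10] at hxe hye ⊢
        have h3 : u.2*(x.1 - y.1) = 0 := by linarith
        rcases mul_eq_zero.1 h3 with h|h
        · exact absurd h h20
        · rw [h]; ring
      · show x.2 - y.2 = (x.2 - y.2)/u.2 * u.2
        field_simp
    · refine ⟨(x.1 - y.1)/u.1, Prod.ext ?_ ?_⟩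
      · show x.1 - y.1 = (x.1 - y.1)/u.1 * u.1
        field_simp
      · show x.2 - y.2 = (x.1 - y.1)/u.1 * u.2
        have h3 : u.2*(x.1 - y.1) = u.1*(x.2 - y.2) := by linarith
        field_simp
        linarith [h3]
  obtain ⟨hXτmem, hXτdim, hXτsub⟩ := hX1 τ hfaceτ
  have hw0X : w0 ∈ X τ := hXτsub hw0τ
  have hqsX : qs ∈ X τ := hXτsub hqsτ
  have hsd1 : setDim (X τ) = 1 := by rw [hXτdim, hdimτ]
  simp only [XrayST, mem_insert_iff, mem_singleton_iff] at hXτmem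
  have hsing : ∀ a : Pt, X τ = {a} → False := by
    intro a ha
    rw [ha, setDim_singleton] at hsd1
    exact zero_ne_one hsd1
  rcases hXτmem with h|h|h|h|h|h|h|h|h|h|h|h|h|h|h|h
  · exact hsing _ h
  · exact hsing _ h
  · exact hsing _ h
  · exact hsing _ h
  · exact hsing _ h
  · exact hsing _ h
  · -- segment (0,0) (0,t)
    rw [h, mem_seg] at hw0X
    obtain ⟨a, ha0, ha1, hx1, hx2⟩ := hw0X
    have e1 : t - s = (1-a)*0 + a*0 := hx1
    linarith
  · -- segment (0,0) (s+t,0)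
    rw [h, mem_seg] at hw0X
    obtain ⟨a, ha0, ha1, hx1, hx2⟩ := hw0X
    have e2 : s = (1-a)*0 + a*0 := hx2
    linarith
  · -- segment (0,t) (s,t)
    rw [h, mem_seg] at hw0X
    obtain ⟨a, ha0, ha1, hx1, hx2⟩ := hw0X
    have e2 : s = (1-a)*t + a*t := hx2
    have : s = t := by linarith [e2]
    linarith
  · -- segment (s,t) (s+t,0)
    rw [h, mem_seg] at hw0X
    obtain ⟨a, ha0, ha1, hx1, hx2⟩ := hw0X
    have e1 : t - s = (1-a)*s + a*(s+t) := hx1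
    have e2 : s = (1-a)*t + a*0 := hx2
    nlinarith [e1, e2]
  · -- segment (0,0) (s,s)
    rw [h, mem_seg] at hw0X
    obtain ⟨a, ha0, ha1, hx1, hx2⟩ := hw0X
    have e1 : t - s = (1-a)*0 + a*s := hx1
    have e2 : s = (1-a)*0 + a*s := hx2
    linarith
  · -- segment (s,s) (t-s,s) : use qs
    rw [h, mem_seg] at hqsX
    obtain ⟨a, ha0, ha1, hx1, hx2⟩ := hqsX
    have e1 : qs.1 = (1-a)*s + a*(t-s) := hx1
    have e2 : qs.2 = (1-a)*s + a*s := hx2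
    nlinarith [mul_nonneg (by linarith : (0:ℝ) ≤ 1-a) (by linarith : (0:ℝ) ≤ 2*s-t)]
  · -- segment (s,s) (s,t)
    rw [h, mem_seg] at hw0X
    obtain ⟨a, ha0, ha1, hx1, hx2⟩ := hw0X
    have e1 : t - s = (1-a)*s + a*s := hx1
    linarith
  · -- segment (t-s,s) (s+t,0) : use qs
    rw [h, mem_seg] at hqsX
    obtain ⟨a, ha0, ha1, hx1, hx2⟩ := hqsX
    have e1 : qs.1 = (1-a)*(t-s) + a*(s+t) := hx1
    have e2 : qs.2 = (1-a)*s + a*0 := hx2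
    nlinarith [e1, e2]
  · -- segment (t-s,s) (0,t) : use qs
    rw [h, mem_seg] at hqsX
    obtain ⟨a, ha0, ha1, hx1, hx2⟩ := hqsX
    have e1 : qs.1 = (1-a)*(t-s) + a*0 := hx1
    have e2 : qs.2 = (1-a)*s + a*t := hx2
    nlinarith [mul_nonneg ha0 (by linarith : (0:ℝ) ≤ t-s)]
  · -- hexagon
    rw [h, setDim_hex hs hst] at hsd1
    norm_num at hsd1
end XA

end Helpers

/-- For `0 < s < t < 2s`, the x-ray `𝒳(s,t)` does not satisfy the extension
criterion; indeed the strictly convex cone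
`{(x,y) : y ≥ 0 ∧ x + 2y ≤ s + t}`, with vertex `(s + t, 0)`, is compatible
with `𝒳(s,t)` but does not extend to any convex polytope compatible with
`𝒳(s,t)`. -/
theorem XrayST_not_extension_criterion_of_lt_two_smul (s t : ℝ)
    (hs : 0 < s) (hst : s < t) (hts : t < 2 * s) :
    IsConeWithVertex {p : Pt | 0 ≤ p.2 ∧ p.1 + 2 * p.2 ≤ s + t}
      ((s + t, 0) : Pt) ∧
    ContainsNoLine {p : Pt | 0 ≤ p.2 ∧ p.1 + 2 * p.2 ≤ s + t} ∧
    ConeCompat (XrayST s t) {p : Pt | 0 ≤ p.2 ∧ p.1 + 2 * p.2 ≤ s + t}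
      ((s + t, 0) : Pt) ∧
    (∀ Δ : Set Pt, IsPolytope Δ →
      IsExtensionOf Δ {p : Pt | 0 ≤ p.2 ∧ p.1 + 2 * p.2 ≤ s + t}
        ((s + t, 0) : Pt) →
      ¬ PolyCompat (XrayST s t) Δ) ∧
    ¬ ExtensionCriterion (XrayST s t) := by
  refine ⟨XA.part1 hs hst hts, XA.part2 hs hst hts, XA.part3 hs hst hts,
    XA.part4 hs hst hts, ?_⟩
  intro hEC
  obtain ⟨Δ, hpoly, hext, hcompat⟩ :=
    hEC _ _ (XA.part1 hs hst hts) (XA.part2 hs hst hts) (XA.part3 hs hst hts)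
  exact XA.part4 hs hst hts Δ hpoly hext hcompat
end
end
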